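/- arXiv:1502.01147 — 11 statements merged into one kernel-verified Lean document; each statement's English description precedes it below -/
import Mathlib

section
/- Let n ≥ r and let every k-coloring of the edges of K_r contain a monochromatic copy of K_ℓ (i.e., r is k-Ramsey for K_ℓ). Then in any k-coloring of the edges of K_n there are at least n^ℓ / (k · r^ℓ) monochromatic copies of K_ℓ all in the same color. -/
open scoped Classical

/-!
Every `r`-subset of the vertex set contains a monochromatic `ℓ`-clique; colour each `r`-subset
by the colour of one such clique. Some colour `x` is then taken by at least `C(n, r) / k` of the
`r`-subsets, while a fixed `ℓ`-set lies in only `C(n - ℓ, r - ℓ)` of them, so there are at least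
`C(n, r) / (k C(n - ℓ, r - ℓ)) = C(n, ℓ) / (k C(r, ℓ)) ≥ n^ℓ / (k r^ℓ)` monochromatic `ℓ`-cliques
of colour `x`.
-/

open Finset

section Monochromatic

variable {V W κ : Type*}

/-- Edges are the `2`-element finsets; the values of `c` on other finsets play no role. -/
def IsMonochromatic (c : Finset V → κ) (x : κ) (S : Finset V) : Prop :=
  ∀ p ⊆ S, #p = 2 → c p = x

def IsRamsey (W κ : Type*) (ℓ : ℕ) : Prop :=
  ∀ c : Finset W → κ, ∃ S : Finset W, #S = ℓ ∧ ∃ x, IsMonochromatic c x S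

noncomputable def monochromaticCliques [Fintype V] (c : Finset V → κ) (x : κ) (ℓ : ℕ) :
    Finset (Finset V) :=
  {S | #S = ℓ ∧ IsMonochromatic c x S}

theorem mem_monochromaticCliques [Fintype V] {c : Finset V → κ} {x : κ} {ℓ : ℕ} {S : Finset V} :
    S ∈ monochromaticCliques c x ℓ ↔ #S = ℓ ∧ IsMonochromatic c x S := by
  simp [monochromaticCliques]

theorem IsMonochromatic.map {c : Finset V → κ} {x : κ} {S : Finset W} (f : W ↪ V)
    (h : IsMonochromatic (fun p ↦ c (p.map f)) x S) : IsMonochromatic c x (S.map f) := by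
  intro p hp hp2
  obtain ⟨q, hqS, rfl⟩ := subset_map_iff.1 hp
  exact h q hqS (by rwa [card_map] at hp2)

variable {ℓ : ℕ} [Fintype W]

theorem IsRamsey.exists_monochromatic_subset (hRam : IsRamsey W κ ℓ) (c : Finset V → κ)
    {R : Finset V} (hR : #R = Fintype.card W) :
    ∃ x, ∃ S ⊆ R, #S = ℓ ∧ IsMonochromatic c x S := by
  let f : W ↪ V := (Fintype.equivOfCardEq (by simp [hR])).toEmbedding.trans
    (Function.Embedding.subtype (· ∈ R))
  obtain ⟨S, hS, x, hx⟩ := hRam fun p ↦ c (p.map f)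
  refine ⟨x, S.map f, ?_, by rwa [card_map], hx.map f⟩
  intro v hv
  obtain ⟨w, -, rfl⟩ := mem_map.1 hv
  exact Subtype.prop _

theorem IsRamsey.le_card [Nonempty κ] (hRam : IsRamsey W κ ℓ) : ℓ ≤ Fintype.card W := by
  obtain ⟨S, hS, -⟩ := hRam fun _ ↦ Classical.arbitrary κ
  exact hS ▸ card_le_univ S

end Monochromatic

theorem Fintype.exists_card_le_card_mul_card_fiber {α β : Type*} [Fintype β] [Nonempty β]
    (s : Finset α) (f : α → β) : ∃ y, #s ≤ Fintype.card β * #{a ∈ s | f a = y} := by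
  have hβ : (0 : ℚ) < Fintype.card β := by exact_mod_cast Fintype.card_pos
  obtain ⟨y, -, hy⟩ := exists_le_card_fiber_of_nsmul_le_card_of_maps_to (t := univ)
    (b := (#s : ℚ) / Fintype.card β) (fun a _ ↦ mem_univ (f a)) univ_nonempty
    (by rw [card_univ, nsmul_eq_mul, mul_div_cancel₀ _ hβ.ne'])
  refine ⟨y, ?_⟩
  rw [div_le_iff₀ hβ] at hy
  exact_mod_cast hy.trans_eq (mul_comm _ _)

theorem card_le_choose_mul_card_image {V : Type*} [Fintype V] {r ℓ : ℕ}
    {s : Finset (Finset V)} (hs : ∀ R ∈ s, #R = r) (g : Finset V → Finset V)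
    (hg : ∀ R ∈ s, g R ⊆ R ∧ #(g R) = ℓ) :
    #s ≤ (Fintype.card V - ℓ).choose (r - ℓ) * #(s.image g) := by
  refine card_le_mul_card_image s _ fun S hS ↦ ?_
  obtain ⟨R₀, hR₀, rfl⟩ := mem_image.1 hS
  obtain ⟨hsub, hcard⟩ := hg R₀ hR₀
  calc #{R ∈ s | g R = g R₀}
      ≤ #{R ∈ univ.powersetCard r | g R₀ ⊆ R} := by
        refine card_le_card fun R hR ↦ ?_
        obtain ⟨hRs, hRg⟩ := mem_filter.1 hR
        exact mem_filter.2 ⟨mem_powersetCard.2 ⟨subset_univ R, hs R hRs⟩, hRg ▸ (hg R hRs).1⟩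
    _ = (Fintype.card V - ℓ).choose (r - ℓ) := by
        rw [card_filter_powersetCard_subset _ _ _ (subset_univ _)
          (hs R₀ hR₀ ▸ card_le_card hsub), card_univ, hcard]

namespace Nat

theorem pow_mul_descFactorial_le_pow_mul_descFactorial {ℓ r n : ℕ} (hrn : r ≤ n) :
    n ^ ℓ * r.descFactorial ℓ ≤ r ^ ℓ * n.descFactorial ℓ := by
  rw [descFactorial_eq_prod_range, descFactorial_eq_prod_range, pow_eq_prod_const,
    pow_eq_prod_const, ← prod_mul_distrib, ← prod_mul_distrib]
  refine prod_le_prod (fun _ _ ↦ zero_le _) fun i _ ↦ ?_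
  rw [Nat.mul_sub, Nat.mul_sub, mul_comm n r]
  exact Nat.sub_le_sub_left (Nat.mul_le_mul_right i hrn) _

theorem pow_mul_choose_le_pow_mul_choose {ℓ r n : ℕ} (hrn : r ≤ n) :
    n ^ ℓ * r.choose ℓ ≤ r ^ ℓ * n.choose ℓ := by
  have h := pow_mul_descFactorial_le_pow_mul_descFactorial (ℓ := ℓ) hrn
  simp only [descFactorial_eq_factorial_mul_choose, mul_left_comm _ ℓ !] at h
  exact Nat.le_of_mul_le_mul_left h (factorial_pos ℓ)

theorem pow_mul_choose_sub_le_pow_mul_choose {ℓ r n : ℕ} (hlr : ℓ ≤ r) (hrn : r ≤ n) :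
    n ^ ℓ * (n - ℓ).choose (r - ℓ) ≤ r ^ ℓ * n.choose r := by
  refine Nat.le_of_mul_le_mul_right ?_ (choose_pos hlr)
  calc n ^ ℓ * (n - ℓ).choose (r - ℓ) * r.choose ℓ
      = n ^ ℓ * r.choose ℓ * (n - ℓ).choose (r - ℓ) := by ring
    _ ≤ r ^ ℓ * n.choose ℓ * (n - ℓ).choose (r - ℓ) :=
        Nat.mul_le_mul_right _ (pow_mul_choose_le_pow_mul_choose hrn)
    _ = r ^ ℓ * n.choose r * r.choose ℓ := by rw [mul_assoc, ← choose_mul hlr, mul_assoc]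

end Nat

theorem exists_pow_le_mul_card_monochromatic {V W κ : Type*} [Fintype V] [Fintype W]
    [Fintype κ] {ℓ : ℕ} (hRam : IsRamsey W κ ℓ) (hWV : Fintype.card W ≤ Fintype.card V)
    (c : Finset V → κ) :
    ∃ x, Fintype.card V ^ ℓ ≤
      Fintype.card κ * Fintype.card W ^ ℓ * #(monochromaticCliques c x ℓ) := by
  set n := Fintype.card V
  set r := Fintype.card W
  have : Nonempty κ := ⟨c ∅⟩
  have hlr : ℓ ≤ r := hRam.le_card
  choose! col clique hclique using
    fun R (hR : #R = r) ↦ hRam.exists_monochromatic_subset c hR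
  obtain ⟨x, hx⟩ := Fintype.exists_card_le_card_mul_card_fiber
    (univ.powersetCard r : Finset (Finset V)) col
  refine ⟨x, ?_⟩
  set rSets : Finset (Finset V) := {R ∈ univ.powersetCard r | col R = x}
  have hrSets : ∀ R ∈ rSets, #R = r := fun R hR ↦ (mem_powersetCard.1 (mem_filter.1 hR).1).2
  have hmono : rSets.image clique ⊆ monochromaticCliques c x ℓ := by
    intro S hS
    obtain ⟨R, hR, rfl⟩ := mem_image.1 hS
    obtain ⟨-, hcard, hRx⟩ := hclique R (hrSets R hR)
    exact mem_monochromaticCliques.2 ⟨hcard, (mem_filter.1 hR).2 ▸ hRx⟩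
  have hcount : #rSets ≤ (n - ℓ).choose (r - ℓ) * #(monochromaticCliques c x ℓ) :=
    (card_le_choose_mul_card_image hrSets clique
      fun R hR ↦ (hclique R (hrSets R hR)).imp_right And.left).trans
    (Nat.mul_le_mul_left _ (card_le_card hmono))
  have hrSubsets : #(univ.powersetCard r : Finset (Finset V)) = n.choose r := by
    rw [card_powersetCard, card_univ]
  refine Nat.le_of_mul_le_mul_right ?_ (Nat.choose_pos (Nat.sub_le_sub_right hWV ℓ))
  calc n ^ ℓ * (n - ℓ).choose (r - ℓ)
      ≤ r ^ ℓ * n.choose r := Nat.pow_mul_choose_sub_le_pow_mul_choose hlr hWV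
    _ ≤ r ^ ℓ * (Fintype.card κ * #rSets) := Nat.mul_le_mul_left _ (hrSubsets ▸ hx)
    _ ≤ r ^ ℓ * (Fintype.card κ * ((n - ℓ).choose (r - ℓ) *
          #(monochromaticCliques c x ℓ))) := by gcongr
    _ = _ := by ring

theorem stmt_1_general (k ℓ r n : ℕ) (hrn : r ≤ n)
    (hRam : ∀ c : Finset (Fin r) → Fin k, ∃ S : Finset (Fin r), S.card = ℓ ∧
      ∃ x : Fin k, ∀ p ⊆ S, p.card = 2 → c p = x)
    (c : Finset (Fin n) → Fin k) :
    ∃ x : Fin k, ((n : ℝ) ^ ℓ / ((k : ℝ) * (r : ℝ) ^ ℓ)) ≤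
      ((Finset.univ.filter (fun S : Finset (Fin n) =>
        S.card = ℓ ∧ ∀ p ⊆ S, p.card = 2 → c p = x)).card : ℝ) := by
  obtain ⟨x, hx⟩ := exists_pow_le_mul_card_monochromatic hRam
    (by simpa only [Fintype.card_fin] using hrn) c
  simp only [Fintype.card_fin] at hx
  refine ⟨x, div_le_of_le_mul₀ (by positivity) (Nat.cast_nonneg _) ?_⟩
  rw [mul_comm]
  have hcliques : monochromaticCliques c x ℓ =
      univ.filter fun S : Finset (Fin n) ↦ #S = ℓ ∧ ∀ p ⊆ S, #p = 2 → c p = x := by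
    ext S
    simp only [mem_monochromaticCliques, IsMonochromatic, mem_filter, mem_univ, true_and]
  rw [hcliques] at hx
  exact_mod_cast hx

/-- Quantitative Ramsey counting (Fact 2.6): if `r` is `k`-Ramsey for `K_ℓ` and `n ≥ r`,
then any `k`-coloring of the edges of `K_n` contains at least `n^ℓ / (k·r^ℓ)`
monochromatic copies of `K_ℓ`, all in the same color. -/
theorem stmt_1 (k ℓ r n : ℕ) (hk : 1 ≤ k) (hlr : ℓ ≤ r) (hrn : r ≤ n)
    (hRam : ∀ c : Finset (Fin r) → Fin k, ∃ S : Finset (Fin r), S.card = ℓ ∧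
      ∃ x : Fin k, ∀ p ⊆ S, p.card = 2 → c p = x)
    (c : Finset (Fin n) → Fin k) :
    ∃ x : Fin k, ((n : ℝ) ^ ℓ / ((k : ℝ) * (r : ℝ) ^ ℓ)) ≤
      ((Finset.univ.filter (fun S : Finset (Fin n) =>
        S.card = ℓ ∧ ∀ p ⊆ S, p.card = 2 → c p = x)).card : ℝ) :=
  stmt_1_general k ℓ r n hrn hRam c
end

section
/- Let m = r_k(K_t^{(3)}) be the 3-uniform hypergraph Ramsey number, and let F' be the hypergraph on [m] obtained from the complete 3-uniform hypergraph K_m^{(3)} by deleting all edges containing both vertices m-1 and m. Then F' is not k-Ramsey for K_t^{(3)}, i.e., there exists a k-coloring of the edges of F' with no monochromatic copy of K_t^{(3)}. -/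
/-- `n` is `k`-Ramsey for `K_t^{(3)}`: every `k`-coloring of the 3-subsets of an
`n`-element vertex set contains a monochromatic `t`-clique. -/
def Ramsey3 (k t n : ℕ) : Prop :=
  ∀ c : Finset ℕ → Fin k, ∃ S ⊆ Finset.range n, S.card = t ∧
    ∃ x : Fin k, ∀ e ⊆ S, e.card = 3 → c e = x

/-- Let `m = r_k(K_t^{(3)})` and let `F'` be obtained from `K_m^{(3)}` (on vertex set
`range m`) by deleting all edges containing both of the last two vertices `m-2` and `m-1`.
Then `F'` is not `k`-Ramsey for `K_t^{(3)}`: some `k`-coloring has no `t`-set all of whose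
3-subsets are edges of `F'` of one color. -/
theorem stmt_2 (t k m : ℕ) (ht : 4 ≤ t) (hk : 2 ≤ k)
    (hm : IsLeast {n | Ramsey3 k t n} m) :
    ∃ c : Finset ℕ → Fin k,
      ¬ ∃ S ⊆ Finset.range m, S.card = t ∧ ∃ x : Fin k, ∀ e ⊆ S, e.card = 3 →
        (¬ ({m - 2, m - 1} : Finset ℕ) ⊆ e) ∧ c e = x := by
  obtain ⟨hmR, hmin⟩ := hm
  -- m ≥ t
  have hmt : t ≤ m := by
    obtain ⟨S, hS, hcard, -⟩ := hmR (fun _ => ⟨0, by omega⟩)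
    calc t = S.card := hcard.symm
      _ ≤ (Finset.range m).card := Finset.card_le_card hS
      _ = m := Finset.card_range m
  have hnot : ¬ Ramsey3 k t (m - 1) := by
    intro h
    have := hmin h
    omega
  rw [Ramsey3] at hnot
  push_neg at hnot
  obtain ⟨c₀, hc₀⟩ := hnot
  set f : ℕ → ℕ := fun v => if v = m - 1 then m - 2 else v with hf
  refine ⟨fun e => c₀ (e.image f), ?_⟩
  rintro ⟨S, hS, hcard, x, hx⟩
  -- S cannot contain both m-2 and m-1
  have hnotboth : ¬ (m - 2 ∈ S ∧ m - 1 ∈ S) := by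
    rintro ⟨h2, h1⟩
    have hne12 : (m - 2 : ℕ) ≠ m - 1 := by omega
    have hcard2 : ({m - 2, m - 1} : Finset ℕ).card = 2 := by
      rw [Finset.card_insert_of_notMem (by simp [hne12]), Finset.card_singleton]
    have hsd : (S \ {m - 2, m - 1}).Nonempty := by
      rw [← Finset.card_pos]
      have := Finset.le_card_sdiff ({m - 2, m - 1} : Finset ℕ) S
      omega
    obtain ⟨v, hv⟩ := hsd
    rw [Finset.mem_sdiff] at hv
    obtain ⟨hvS, hvne⟩ := hv
    simp only [Finset.mem_insert, Finset.mem_singleton, not_or] at hvne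
    set e : Finset ℕ := insert (m - 2) (insert (m - 1) {v}) with he
    have heS : e ⊆ S := by
      intro w hw
      simp only [he, Finset.mem_insert, Finset.mem_singleton] at hw
      rcases hw with rfl | rfl | rfl <;> assumption
    have hecard : e.card = 3 := by
      rw [he, Finset.card_insert_of_notMem, Finset.card_insert_of_notMem,
        Finset.card_singleton]
      · simp only [Finset.mem_singleton]; omega
      · simp only [Finset.mem_insert, Finset.mem_singleton]
        push_neg
        exact ⟨hne12, fun h => hvne.1 h.symm⟩
    have := (hx e heS hecard).1
    apply this
    intro w hw
    simp only [Finset.mem_insert, Finset.mem_singleton] at hw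
    simp only [he, Finset.mem_insert, Finset.mem_singleton]
    tauto
  have hinj : Set.InjOn f S := by
    intro a ha b hb hab
    simp only [hf] at hab
    split_ifs at hab with h1 h2 h2
    · omega
    · exfalso; exact hnotboth ⟨hab ▸ hb, h1 ▸ ha⟩
    · exfalso; exact hnotboth ⟨hab ▸ ha, h2 ▸ hb⟩
    · exact hab
  set S' := S.image f with hS'
  have hS'sub : S' ⊆ Finset.range (m - 1) := by
    intro w hw
    simp only [hS', Finset.mem_image] at hw
    obtain ⟨v, hv, rfl⟩ := hw
    have hvm : v < m := Finset.mem_range.mp (hS hv)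
    simp only [hf]
    rw [Finset.mem_range]
    split_ifs with h
    · omega
    · omega
  have hS'card : S'.card = t := by
    rw [hS', Finset.card_image_of_injOn hinj, hcard]
  obtain ⟨e', he'sub, he'card, hne⟩ := hc₀ S' hS'sub hS'card x
  set e : Finset ℕ := S.filter (fun v => f v ∈ e') with he
  have heS : e ⊆ S := Finset.filter_subset _ _
  have himg : e.image f = e' := by
    apply Finset.Subset.antisymm
    · intro w hw
      simp only [he, Finset.mem_image, Finset.mem_filter] at hw
      obtain ⟨v, ⟨-, hv2⟩, rfl⟩ := hw
      exact hv2
    · intro w hw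
      have := he'sub hw
      simp only [hS', Finset.mem_image] at this
      obtain ⟨v, hv, rfl⟩ := this
      simp only [he, Finset.mem_image, Finset.mem_filter]
      exact ⟨v, ⟨hv, hw⟩, rfl⟩
  have hecard : e.card = 3 := by
    have : e.card = (e.image f).card :=
      (Finset.card_image_of_injOn (hinj.mono (by exact_mod_cast heS))).symm
    rw [this, himg, he'card]
  have := (hx e heS hecard).2
  simp only [himg] at this
  exact hne this
end

section
/- Let H be a minimal 2-Ramsey 3-uniform hypergraph for K_t^{(3)} with t ≥ 4, and let u, v be two vertices of H with codegree deg_H(u,v) > 0. Then deg_H(u,v) ≥ (t-2)^2. -/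
/-- A 3-uniform hypergraph with edge set `E` is 2-Ramsey for `K_t^{(3)}`. -/
def Ramsey2H {V : Type} [DecidableEq V] (t : ℕ) (E : Finset (Finset V)) : Prop :=
  ∀ c : Finset V → Fin 2, ∃ S : Finset V, S.card = t ∧
    ∃ x : Fin 2, ∀ e ⊆ S, e.card = 3 → e ∈ E ∧ c e = x

section Aux

variable {V : Type} [DecidableEq V]

/-- A "good" set of color `x`: a `(t-2)`-set `T` avoiding `u, v`, all of whose
link triples `{u,v,w}` are edges, and all of whose non-link triples within
`T ∪ {u,v}` are edges of color `x` under `c`. -/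
def GoodT (t : ℕ) (E : Finset (Finset V)) (c : Finset V → Fin 2) (u v : V)
    (x : Fin 2) (T : Finset V) : Prop :=
  T.card = t - 2 ∧ u ∉ T ∧ v ∉ T ∧
  (∀ w ∈ T, insert u (insert v {w}) ∈ E) ∧
  (∀ e ⊆ T ∪ {u, v}, e.card = 3 → ¬(u ∈ e ∧ v ∈ e) → e ∈ E ∧ c e = x)

lemma extract (t : ℕ) (E : Finset (Finset V)) (hRam : Ramsey2H t E)
    (u v : V) (huv : u ≠ v) (e₀ : Finset V) (hu₀ : u ∈ e₀) (hv₀ : v ∈ e₀)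
    (c : Finset V → Fin 2)
    (hc : ∀ S : Finset V, S.card = t → ∀ x : Fin 2,
      ∃ e, e ⊆ S ∧ e.card = 3 ∧ (e ∈ E.erase e₀ → c e ≠ x))
    (X : Finset V) :
    ∃ x T, GoodT t E c u v x T ∧ (x = 1 → T ⊆ X) ∧ (x = 0 → ∀ w ∈ T, w ∉ X) := by
  classical
  set cc : Finset V → Fin 2 := fun e =>
    if u ∈ e ∧ v ∈ e then (if e \ {u, v} ⊆ X then 1 else 0) else c e with hcc
  obtain ⟨S, hScard, x, hS⟩ := hRam cc
  have huvS : u ∈ S ∧ v ∈ S := by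
    by_contra h
    obtain ⟨e, heS, he3, hebad⟩ := hc S hScard x
    have heE := hS e heS he3
    have hnuv : ¬(u ∈ e ∧ v ∈ e) := fun hh => h ⟨heS hh.1, heS hh.2⟩
    have hcce : cc e = c e := by rw [hcc]; exact if_neg hnuv
    have hene : e ≠ e₀ := by rintro rfl; exact hnuv ⟨hu₀, hv₀⟩
    have : c e = x := by rw [← hcce]; exact heE.2
    exact hebad (Finset.mem_erase.mpr ⟨hene, heE.1⟩) this
  obtain ⟨huS, hvS⟩ := huvS
  have hcard2 : ({u, v} : Finset V).card = 2 := by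
    rw [Finset.card_insert_of_notMem (Finset.notMem_singleton.mpr huv),
      Finset.card_singleton]
  have hsubuv : ({u, v} : Finset V) ⊆ S := by
    intro a ha
    rcases Finset.mem_insert.mp ha with rfl | ha
    · exact huS
    · exact (Finset.mem_singleton.mp ha) ▸ hvS
  set T := S \ {u, v} with hT
  have hTS : T ⊆ S := Finset.sdiff_subset
  have hTu : u ∉ T := by simp [hT]
  have hTv : v ∉ T := by simp [hT]
  have hTcard : T.card = t - 2 := by
    rw [hT, Finset.card_sdiff_of_subset hsubuv, hScard, hcard2]
  have hTUS : T ∪ {u, v} ⊆ S := Finset.union_subset hTS hsubuv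
  have hlink : ∀ w ∈ T, insert u (insert v {w}) ∈ E ∧
      (if w ∈ X then (1 : Fin 2) else 0) = x := by
    intro w hw
    have hwu : w ≠ u := fun hh => hTu (hh ▸ hw)
    have hwv : w ≠ v := fun hh => hTv (hh ▸ hw)
    have hsub : insert u (insert v {w}) ⊆ S := by
      intro a ha
      rcases Finset.mem_insert.mp ha with rfl | ha
      · exact huS
      rcases Finset.mem_insert.mp ha with rfl | ha
      · exact hvS
      · exact hTS ((Finset.mem_singleton.mp ha) ▸ hw)
    have hc3 : (insert u (insert v ({w} : Finset V))).card = 3 := by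
      rw [Finset.card_insert_of_notMem (by simp [huv, hwu.symm]),
        Finset.card_insert_of_notMem (Finset.notMem_singleton.mpr hwv.symm),
        Finset.card_singleton]
    have hSe := hS _ hsub hc3
    refine ⟨hSe.1, ?_⟩
    have hdiff : (insert u (insert v ({w} : Finset V))) \ {u, v} = {w} := by
      ext a
      simp only [Finset.mem_sdiff, Finset.mem_insert, Finset.mem_singleton]
      constructor
      · rintro ⟨(rfl | rfl | rfl), hna⟩ <;> tauto
      · rintro rfl
        exact ⟨Or.inr (Or.inr rfl), by tauto⟩
    have hce : cc (insert u (insert v {w})) = if w ∈ X then 1 else 0 := by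
      rw [hcc]
      simp [hdiff]
    rw [← hce]
    exact hSe.2
  refine ⟨x, T, ⟨hTcard, hTu, hTv, fun w hw => (hlink w hw).1, ?_⟩, ?_, ?_⟩
  · intro e heT he3 hnuv
    have hSe := hS e (heT.trans hTUS) he3
    have hcce : cc e = c e := by rw [hcc]; exact if_neg hnuv
    exact ⟨hSe.1, by rw [← hcce]; exact hSe.2⟩
  · intro hx1 w hw
    have h2 := (hlink w hw).2
    by_contra hwX
    rw [if_neg hwX, hx1] at h2
    exact absurd h2 (by decide)
  · intro hx0 w hw hwX
    have h2 := (hlink w hw).2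
    rw [if_pos hwX, hx0] at h2
    exact absurd h2 (by decide)

lemma cross (t : ℕ) (E : Finset (Finset V)) (c : Finset V → Fin 2) (u v : V)
    (huv : u ≠ v) (T T' : Finset V)
    (hT : GoodT t E c u v 0 T) (hT' : GoodT t E c u v 1 T')
    (w w' : V) (hw : w ∈ T) (hw2 : w ∈ T') (hw' : w' ∈ T) (hw'2 : w' ∈ T') :
    w = w' := by
  by_contra hne
  set e : Finset V := insert u (insert w {w'}) with he
  have hwu : w ≠ u := fun hh => hT.2.1 (hh ▸ hw)
  have hw'u : w' ≠ u := fun hh => hT.2.1 (hh ▸ hw')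
  have hwv : w ≠ v := fun hh => hT.2.2.1 (hh ▸ hw)
  have hw'v : w' ≠ v := fun hh => hT.2.2.1 (hh ▸ hw')
  have he3 : e.card = 3 := by
    rw [he, Finset.card_insert_of_notMem (by simp [hwu.symm, hw'u.symm]),
      Finset.card_insert_of_notMem (Finset.notMem_singleton.mpr hne),
      Finset.card_singleton]
  have hnuv : ¬(u ∈ e ∧ v ∈ e) := by
    rintro ⟨-, hv⟩
    rw [he] at hv
    rcases Finset.mem_insert.mp hv with h | hv
    · exact huv h.symm
    rcases Finset.mem_insert.mp hv with h | hv
    · exact hwv h.symm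
    · exact hw'v (Finset.mem_singleton.mp hv).symm
  have hsub : ∀ (A : Finset V), w ∈ A → w' ∈ A → e ⊆ A ∪ {u, v} := by
    intro A hwA hw'A a ha
    rw [he] at ha
    rcases Finset.mem_insert.mp ha with rfl | ha
    · exact Finset.mem_union_right _ (Finset.mem_insert_self _ _)
    rcases Finset.mem_insert.mp ha with rfl | ha
    · exact Finset.mem_union_left _ hwA
    · exact Finset.mem_union_left _ ((Finset.mem_singleton.mp ha) ▸ hw'A)
  have h0 := (hT.2.2.2.2 e (hsub T hw hw') he3 hnuv).2
  have h1 := (hT'.2.2.2.2 e (hsub T' hw2 hw'2) he3 hnuv).2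
  rw [h0] at h1
  exact absurd h1 (by decide)

end Aux

/-- In a minimal 2-Ramsey 3-uniform hypergraph for `K_t^{(3)}` (`t ≥ 4`), any two
vertices of positive codegree have codegree at least `(t-2)²`. -/
theorem stmt_6 {V : Type} [DecidableEq V] (t : ℕ) (ht : 4 ≤ t)
    (E : Finset (Finset V)) (h3 : ∀ e ∈ E, e.card = 3)
    (hRam : Ramsey2H t E) (hmin : ∀ E' ⊂ E, ¬ Ramsey2H t E')
    (u v : V) (huv : u ≠ v)
    (hpos : 0 < (E.filter fun e => u ∈ e ∧ v ∈ e).card) :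
    (t - 2) ^ 2 ≤ (E.filter fun e => u ∈ e ∧ v ∈ e).card := by
  classical
  obtain ⟨e₀, he₀⟩ := Finset.card_pos.mp hpos
  rw [Finset.mem_filter] at he₀
  obtain ⟨he₀E, hu₀, hv₀⟩ := he₀
  have hnr := hmin _ (Finset.erase_ssubset he₀E)
  rw [Ramsey2H] at hnr
  push_neg at hnr
  obtain ⟨c, hc⟩ := hnr
  have hc' : ∀ S : Finset V, S.card = t → ∀ x : Fin 2,
      ∃ e, e ⊆ S ∧ e.card = 3 ∧ (e ∈ E.erase e₀ → c e ≠ x) := by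
    intro S hS x
    obtain ⟨e, h1, h2, h3'⟩ := hc S hS x
    exact ⟨e, h1, h2, h3'⟩
  have hstep := extract t E hRam u v huv e₀ hu₀ hv₀ c hc'
  -- build a pairwise disjoint family of k good sets of color 0, for k ≤ t - 2
  have hfam : ∀ k, k ≤ t - 2 → ∃ F : Finset (Finset V), F.card = k ∧
      (∀ T ∈ F, GoodT t E c u v 0 T) ∧
      (∀ T ∈ F, ∀ T' ∈ F, T ≠ T' → Disjoint T T') := by
    intro k
    induction k with
    | zero => exact fun _ => ⟨∅, by simp, by simp, by simp⟩
    | succ k ih =>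
      intro hk
      obtain ⟨F, hFcard, hgood, hdisj⟩ := ih (Nat.le_of_succ_le hk)
      obtain ⟨x, T, hGT, h1, h0⟩ := hstep (F.biUnion (fun T => T))
      have hx : x = 0 := by
        by_contra hxne
        have hx1 : x = 1 := by omega
        rw [hx1] at hGT
        have hTsub : T ⊆ F.biUnion (fun T' => T ∩ T') := by
          intro w hw
          obtain ⟨T', hT'mem, hwT'⟩ := Finset.mem_biUnion.mp (h1 hx1 hw)
          exact Finset.mem_biUnion.mpr ⟨T', hT'mem, Finset.mem_inter.mpr ⟨hw, hwT'⟩⟩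
        have hone : ∀ T' ∈ F, (T ∩ T').card ≤ 1 := by
          intro T' hT'
          refine Finset.card_le_one.mpr ?_
          intro a ha b hb
          rw [Finset.mem_inter] at ha hb
          exact cross t E c u v huv T' T (hgood T' hT') hGT
            a b ha.2 ha.1 hb.2 hb.1
        have hcardle : T.card ≤ k := by
          calc T.card ≤ (F.biUnion (fun T' => T ∩ T')).card :=
                Finset.card_le_card hTsub
            _ ≤ ∑ T' ∈ F, (T ∩ T').card := Finset.card_biUnion_le
            _ ≤ ∑ _T' ∈ F, 1 := Finset.sum_le_sum hone
            _ = k := by rw [Finset.sum_const, hFcard, smul_eq_mul, mul_one]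
        rw [hGT.1] at hcardle
        omega
      subst hx
      have hTnot : T ∉ F := by
        intro hmem
        have hTne : T.Nonempty := by
          rw [← Finset.card_pos, hGT.1]; omega
        obtain ⟨w, hw⟩ := hTne
        exact h0 rfl w hw (Finset.mem_biUnion.mpr ⟨T, hmem, hw⟩)
      refine ⟨insert T F, ?_, ?_, ?_⟩
      · rw [Finset.card_insert_of_notMem hTnot, hFcard]
      · intro A hA
        rcases Finset.mem_insert.mp hA with rfl | hA
        · exact hGT
        · exact hgood A hA
      · have hTdisj : ∀ B ∈ F, Disjoint T B := by
          intro B hB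
          rw [Finset.disjoint_left]
          intro a ha hab
          exact h0 rfl a ha (Finset.mem_biUnion.mpr ⟨B, hB, hab⟩)
        intro A hA B hB hne
        rcases Finset.mem_insert.mp hA with hAT | hA
        · rcases Finset.mem_insert.mp hB with hBT | hB
          · exact absurd (hAT.trans hBT.symm) hne
          · rw [hAT]; exact hTdisj B hB
        · rcases Finset.mem_insert.mp hB with hBT | hB
          · rw [hBT]; exact (hTdisj A hA).symm
          · exact hdisj A hA B hB hne
  obtain ⟨F, hFcard, hgood, hdisj⟩ := hfam (t - 2) le_rfl
  have hUcard : (F.biUnion (fun T => T)).card = (t - 2) * (t - 2) := by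
    rw [Finset.card_biUnion hdisj]
    calc ∑ T ∈ F, T.card = ∑ _T ∈ F, (t - 2) :=
          Finset.sum_congr rfl (fun T hT => (hgood T hT).1)
      _ = (t - 2) * (t - 2) := by rw [Finset.sum_const, hFcard, smul_eq_mul]
  have himg : (F.biUnion (fun T => T)).image (fun w => insert u (insert v ({w} : Finset V)))
      ⊆ E.filter (fun e => u ∈ e ∧ v ∈ e) := by
    intro e he
    obtain ⟨w, hw, rfl⟩ := Finset.mem_image.mp he
    obtain ⟨T, hT, hwT⟩ := Finset.mem_biUnion.mp hw
    exact Finset.mem_filter.mpr ⟨(hgood T hT).2.2.2.1 w hwT, by simp, by simp⟩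
  have hinj : Set.InjOn (fun w => insert u (insert v ({w} : Finset V)))
      (F.biUnion (fun T => T)) := by
    intro a ha b hb hab
    simp only [Finset.coe_biUnion, Set.mem_iUnion, Finset.mem_coe] at ha hb
    obtain ⟨T, hT, haT⟩ := ha
    have hau : a ≠ u := fun hh => (hgood T hT).2.1 (hh ▸ haT)
    have hav : a ≠ v := fun hh => (hgood T hT).2.2.1 (hh ▸ haT)
    have hab' : insert u (insert v ({a} : Finset V))
        = insert u (insert v ({b} : Finset V)) := hab
    have hmem : a ∈ insert u (insert v ({b} : Finset V)) := by
      rw [← hab']; simp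
    rcases Finset.mem_insert.mp hmem with h | hmem
    · exact absurd h hau
    rcases Finset.mem_insert.mp hmem with h | hmem
    · exact absurd h hav
    · exact Finset.mem_singleton.mp hmem
  calc (t - 2) ^ 2 = (t - 2) * (t - 2) := sq (t - 2)
    _ = (F.biUnion (fun T => T)).card := hUcard.symm
    _ = ((F.biUnion (fun T => T)).image
          (fun w => insert u (insert v ({w} : Finset V)))).card :=
        (Finset.card_image_of_injOn hinj).symm
    _ ≤ (E.filter fun e => u ∈ e ∧ v ∈ e).card := Finset.card_le_card himg
end

section
/- Let H be a 3-uniform hypergraph, let u, v ∈ V(H) with deg_H(u,v) < (t-2)^2 where t ≥ 4, and let H' be obtained from H by deleting all edges containing both u and v. If H' admits a 2-coloring of its edges with no monochromatic K_t^{(3)}, then H also admits a 2-coloring of its edges with no monochromatic K_t^{(3)}. -/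
/-- If two vertices `u, v` of a 3-uniform hypergraph `H` have codegree less than `(t-2)²`
(`t ≥ 4`), and `H'`, obtained by deleting all edges containing both `u` and `v`, admits a
2-coloring with no monochromatic `K_t^{(3)}`, then so does `H`. -/
theorem stmt_7 {V : Type} [DecidableEq V] (t : ℕ) (ht : 4 ≤ t)
    (E : Finset (Finset V)) (h3 : ∀ e ∈ E, e.card = 3) (u v : V) (huv : u ≠ v)
    (hcodeg : (E.filter fun e => u ∈ e ∧ v ∈ e).card < (t - 2) ^ 2)
    (c' : Finset V → Fin 2)
    (hc' : ¬ ∃ S : Finset V, S.card = t ∧ ∃ x : Fin 2, ∀ e ⊆ S, e.card = 3 →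
      e ∈ E.filter (fun g => ¬ (u ∈ g ∧ v ∈ g)) ∧ c' e = x) :
    ∃ c : Finset V → Fin 2, ¬ ∃ S : Finset V, S.card = t ∧ ∃ x : Fin 2,
      ∀ e ⊆ S, e.card = 3 → e ∈ E ∧ c e = x := by
  classical
  -- a triple {u,v,w} in E forces w ∉ {u,v}
  have hwne : ∀ w : V, insert u (insert v {w}) ∈ E → w ≠ u ∧ w ≠ v := by
    intro w hwE
    have hc3 := h3 _ hwE
    constructor
    · rintro rfl
      have heq : (insert w (insert v {w}) : Finset V) = insert w {v} := by
        ext y; simp; try tauto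
      rw [heq] at hc3
      have : (insert w {v} : Finset V).card ≤ 2 :=
        (Finset.card_insert_le _ _).trans (by simp)
      omega
    · rintro rfl
      have heq : (insert u (insert w {w}) : Finset V) = insert u {w} := by
        ext y; simp; try tauto
      rw [heq] at hc3
      have : (insert u {w} : Finset V).card ≤ 2 :=
        (Finset.card_insert_le _ _).trans (by simp)
      omega
  have card3 : ∀ a b c : V, a ≠ b → a ≠ c → b ≠ c →
      (insert a (insert b {c}) : Finset V).card = 3 := by
    intro a b c h1 h2 h3
    rw [Finset.card_insert_of_notMem (by simp [h1, h2]),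
      Finset.card_insert_of_notMem (by simp [h3]), Finset.card_singleton]
  -- vertex neighborhood container
  set N : Finset V := (E.filter fun e => u ∈ e ∧ v ∈ e).biUnion (fun e => e) with hN
  -- good blocks
  set Good : Finset V → Prop := fun B =>
    B.card = t - 2 ∧ (∀ w ∈ B, insert u (insert v {w}) ∈ E) ∧
    (∀ e ⊆ insert u B, e.card = 3 → e ∈ E ∧ c' e = 0) with hGood
  have hGoodSub : ∀ B, Good B → B ⊆ N := by
    intro B hB w hw
    simp only [hN, Finset.mem_biUnion, Finset.mem_filter]
    exact ⟨insert u (insert v {w}), ⟨hB.2.1 w hw, by simp, by simp⟩, by simp⟩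
  set P : Finset (Finset V) → Prop := fun 𝓑 =>
    (∀ B ∈ 𝓑, Good B) ∧ ∀ B ∈ 𝓑, ∀ B' ∈ 𝓑, B ≠ B' → Disjoint B B' with hP
  set F : Finset (Finset (Finset V)) := N.powerset.powerset.filter P with hF
  have hFne : F.Nonempty := ⟨∅, by simp [hF, hP]⟩
  obtain ⟨𝓑, h𝓑F, hmax⟩ := F.exists_max_image Finset.card hFne
  have h𝓑P : P 𝓑 := (Finset.mem_filter.mp h𝓑F).2
  obtain ⟨h𝓑good, h𝓑dis⟩ := h𝓑P
  set U : Finset V := 𝓑.biUnion (fun B => B) with hU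
  -- cardinality of U
  have hUcard : U.card = 𝓑.card * (t - 2) := by
    rw [hU, Finset.card_biUnion (fun B hB B' hB' hne => h𝓑dis B hB B' hB' hne)]
    have : ∑ B ∈ 𝓑, B.card = ∑ _B ∈ 𝓑, (t - 2) :=
      Finset.sum_congr rfl (fun B hB => (h𝓑good B hB).1)
    rw [this, Finset.sum_const, smul_eq_mul]
  have hUle : U.card ≤ (E.filter fun e => u ∈ e ∧ v ∈ e).card := by
    apply Finset.card_le_card_of_injOn (fun w => insert u (insert v {w}))
    · intro w hw
      obtain ⟨B, hB, hwB⟩ := Finset.mem_biUnion.mp hw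
      exact Finset.mem_filter.mpr ⟨(h𝓑good B hB).2.1 w hwB, by simp, by simp⟩
    · intro w hw w' hw' heq
      obtain ⟨B, hB, hwB⟩ := Finset.mem_biUnion.mp hw
      obtain ⟨B', hB', hwB'⟩ := Finset.mem_biUnion.mp hw'
      have h1 := hwne w ((h𝓑good B hB).2.1 w hwB)
      have h2 := hwne w' ((h𝓑good B' hB').2.1 w' hwB')
      have heq' : (insert u (insert v {w}) : Finset V) = insert u (insert v {w'}) := heq
      have : w' ∈ (insert u (insert v {w}) : Finset V) := by rw [heq']; simp
      simp only [Finset.mem_insert, Finset.mem_singleton] at this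
      rcases this with h | h | h
      · exact absurd h h2.1
      · exact absurd h h2.2
      · exact h.symm
  have h𝓑lt : 𝓑.card < t - 2 := by
    have h2 : 2 ≤ t - 2 := by omega
    have : 𝓑.card * (t - 2) < (t - 2) * (t - 2) := by
      rw [sq] at hcodeg; omega
    exact Nat.lt_of_mul_lt_mul_right this
  -- the coloring
  set c : Finset V → Fin 2 := fun e =>
    if u ∈ e ∧ v ∈ e then (if e \ insert u {v} ⊆ U then 1 else 0) else c' e with hc
  have hcno : ∀ e, ¬ (u ∈ e ∧ v ∈ e) → c e = c' e := by
    intro e h; simp only [hc]; rw [if_neg h]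
  have hcyes : ∀ e, u ∈ e → v ∈ e →
      c e = if e \ insert u {v} ⊆ U then 1 else 0 := by
    intro e h1 h2; simp only [hc]; rw [if_pos ⟨h1, h2⟩]
  refine ⟨c, ?_⟩
  rintro ⟨S, hScard, x, hS⟩
  by_cases huvS : u ∈ S ∧ v ∈ S
  · -- S contains both u and v
    set S' : Finset V := S \ insert u {v} with hS'
    have hS'sub : S' ⊆ S := Finset.sdiff_subset
    have hS'mem : ∀ w ∈ S', w ∈ S ∧ w ≠ u ∧ w ≠ v := by
      intro w hw
      simp only [hS', Finset.mem_sdiff, Finset.mem_insert, Finset.mem_singleton,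
        not_or] at hw
      exact ⟨hw.1, hw.2.1, hw.2.2⟩
    have huvsubS : (insert u {v} : Finset V) ⊆ S := by
      intro w hw
      simp only [Finset.mem_insert, Finset.mem_singleton] at hw
      rcases hw with rfl | rfl
      · exact huvS.1
      · exact huvS.2
    have hS'card : S'.card = t - 2 := by
      rw [hS', Finset.card_sdiff_of_subset huvsubS, hScard,
        Finset.card_insert_of_notMem (by simp [huv]), Finset.card_singleton]
    have htriple : ∀ w ∈ S', insert u (insert v {w}) ∈ E ∧
        c (insert u (insert v {w})) = x := by
      intro w hw
      obtain ⟨hwS, hwu, hwv⟩ := hS'mem w hw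
      apply hS
      · intro y hy
        simp only [Finset.mem_insert, Finset.mem_singleton] at hy
        rcases hy with rfl | rfl | rfl
        · exact huvS.1
        · exact huvS.2
        · exact hwS
      · exact card3 u v w huv (Ne.symm hwu) (Ne.symm hwv)
    have hcval : ∀ w ∈ S', c (insert u (insert v {w})) = if w ∈ U then 1 else 0 := by
      intro w hw
      obtain ⟨_, hwu, hwv⟩ := hS'mem w hw
      rw [hcyes _ (by simp) (by simp)]
      have hdiff : (insert u (insert v {w}) : Finset V) \ insert u {v} = {w} := by
        ext y
        simp only [Finset.mem_sdiff, Finset.mem_insert, Finset.mem_singleton, not_or]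
        constructor
        · rintro ⟨rfl | rfl | rfl, h⟩ <;> tauto
        · rintro rfl
          exact ⟨Or.inr (Or.inr rfl), hwu, hwv⟩
      rw [hdiff]
      simp only [Finset.singleton_subset_iff]
    fin_cases x
    · -- blue case: S' is a new good block, contradicting maximality
      have hnotU : ∀ w ∈ S', w ∉ U := by
        intro w hw hwU
        have := (htriple w hw).2
        rw [hcval w hw, if_pos hwU] at this
        exact absurd this (by decide)
      have hS'good : Good S' := by
        refine ⟨hS'card, fun w hw => (htriple w hw).1, ?_⟩
        intro e he hce
        have heS : e ⊆ S := by
          intro y hy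
          rcases Finset.mem_insert.mp (he hy) with rfl | h
          · exact huvS.1
          · exact hS'sub h
        have hSe := hS e heS hce
        refine ⟨hSe.1, ?_⟩
        have hve : v ∉ e := by
          intro hve
          rcases Finset.mem_insert.mp (he hve) with h | h
          · exact huv h.symm
          · exact (hS'mem v h).2.2 rfl
        rw [← hcno e (fun h => hve h.2)]
        exact hSe.2
      have hS'dis : ∀ B ∈ 𝓑, Disjoint S' B := by
        intro B hB
        rw [Finset.disjoint_left]
        intro w hw hwB
        exact hnotU w hw (Finset.mem_biUnion.mpr ⟨B, hB, hwB⟩)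
      have hS'not : S' ∉ 𝓑 := by
        intro hmem
        have hne : S'.Nonempty := Finset.card_pos.mp (by omega)
        obtain ⟨w, hw⟩ := hne
        exact (Finset.disjoint_left.mp (hS'dis S' hmem) hw) hw
      have hins : insert S' 𝓑 ∈ F := by
        rw [hF, Finset.mem_filter]
        constructor
        · rw [Finset.mem_powerset]
          intro B hB
          rw [Finset.mem_powerset]
          rcases Finset.mem_insert.mp hB with rfl | hB
          · exact hGoodSub _ hS'good
          · exact hGoodSub _ (h𝓑good B hB)
        · constructor
          · intro B hB
            rcases Finset.mem_insert.mp hB with rfl | hB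
            · exact hS'good
            · exact h𝓑good B hB
          · intro B hB B' hB' hne
            rcases Finset.mem_insert.mp hB with rfl | hB <;>
              rcases Finset.mem_insert.mp hB' with rfl | hB'
            · exact absurd rfl hne
            · exact hS'dis B' hB'
            · exact (hS'dis B hB).symm
            · exact h𝓑dis B hB B' hB' hne
      have := hmax _ hins
      rw [Finset.card_insert_of_notMem hS'not] at this
      omega
    · -- red case: pigeonhole inside the blocks
      have hinU : ∀ w ∈ S', w ∈ U := by
        intro w hw
        by_contra hwU
        have := (htriple w hw).2
        rw [hcval w hw, if_neg hwU] at this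
        exact absurd this (by decide)
      set f : V → Finset V := fun w =>
        if h : ∃ B, B ∈ 𝓑 ∧ w ∈ B then h.choose else ∅ with hf
      have hfspec : ∀ w ∈ S', f w ∈ 𝓑 ∧ w ∈ f w := by
        intro w hw
        have h : ∃ B, B ∈ 𝓑 ∧ w ∈ B := by
          obtain ⟨B, hB, hwB⟩ := Finset.mem_biUnion.mp (hinU w hw)
          exact ⟨B, hB, hwB⟩
        simp only [hf, dif_pos h]
        exact h.choose_spec
      have hlt : 𝓑.card < S'.card := by omega
      obtain ⟨a, ha, b, hb, hab, hfab⟩ :=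
        Finset.exists_ne_map_eq_of_card_lt_of_maps_to hlt (fun w hw => (hfspec w hw).1)
      have haB : a ∈ f a := (hfspec a ha).2
      have hbB : b ∈ f a := hfab ▸ (hfspec b hb).2
      have hBgood : Good (f a) := h𝓑good (f a) (hfspec a ha).1
      have hau := (hS'mem a ha).2.1
      have hbu := (hS'mem b hb).2.1
      have heS : (insert u (insert a {b}) : Finset V) ⊆ S := by
        intro y hy
        simp only [Finset.mem_insert, Finset.mem_singleton] at hy
        rcases hy with rfl | rfl | rfl
        · exact huvS.1
        · exact hS'sub ha
        · exact hS'sub hb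
      have hecard : (insert u (insert a {b}) : Finset V).card = 3 :=
        card3 u a b (Ne.symm hau) (Ne.symm hbu) hab
      have hSe := hS _ heS hecard
      have hve : v ∉ (insert u (insert a {b}) : Finset V) := by
        simp only [Finset.mem_insert, Finset.mem_singleton]
        push_neg
        exact ⟨Ne.symm huv, fun h => (hS'mem a ha).2.2 h.symm,
          fun h => (hS'mem b hb).2.2 h.symm⟩
      have heB : (insert u (insert a {b}) : Finset V) ⊆ insert u (f a) := by
        intro y hy
        simp only [Finset.mem_insert, Finset.mem_singleton] at hy
        rcases hy with rfl | rfl | rfl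
        · exact Finset.mem_insert_self _ _
        · exact Finset.mem_insert_of_mem haB
        · exact Finset.mem_insert_of_mem hbB
      have h0 := (hBgood.2.2 _ heB hecard).2
      rw [← hcno _ (fun h => hve h.2), hSe.2] at h0
      exact absurd h0 (by decide)
  · -- S misses u or v: use hc'
    apply hc'
    refine ⟨S, hScard, x, fun e he hce => ?_⟩
    have hne : ¬ (u ∈ e ∧ v ∈ e) := fun h => huvS ⟨he h.1, he h.2⟩
    have hSe := hS e he hce
    exact ⟨Finset.mem_filter.mpr ⟨hSe.1, hne⟩, (hcno e hne) ▸ hSe.2⟩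
end

section
/- Fix t ≥ 4. Let V = V_1 ∪ ... ∪ V_{t-2} ∪ {a,b} where the V_i are pairwise disjoint sets of size t-2 and a,b are two additional vertices. Let H be the 3-uniform hypergraph on V whose edges are: all 3-subsets of each V_i; all sets e ∪ {w} with e a 2-subset of some V_i and w ∈ {a,b}; all 3-subsets of ∪V_i meeting each V_i in at most one vertex; and all sets e ∪ {w} with e a 2-subset of ∪V_i meeting each V_i in at most one vertex and w ∈ {a,b}. Color blue every edge contained in V_i ∪ {a} or V_i ∪ {b} for some i, and red every other edge of H. Then this 2-coloring contains no monochromatic copy of K_t^{(3)}. -/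
/-- `e` meets each of the sets `W i` in at most one vertex. -/
def Crossing {α : Type} [DecidableEq α] {m : ℕ} (W : Fin m → Finset α)
    (e : Finset α) : Prop :=
  ∀ i, (e ∩ W i).card ≤ 1

/-- The edge set of the hypergraph `H` from the upper-bound construction:
all 3-subsets of each `V_i`; pairs in some `V_i` plus `a` or `b`; crossing 3-subsets of
`∪V_i`; and crossing pairs of `∪V_i` plus `a` or `b`. -/
def IsEdgeH8 {α : Type} [DecidableEq α] {m : ℕ} (W : Fin m → Finset α) (a b : α)
    (e : Finset α) : Prop :=
  (∃ i, e.card = 3 ∧ e ⊆ W i) ∨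
  (∃ i, ∃ p ⊆ W i, p.card = 2 ∧ (e = insert a p ∨ e = insert b p)) ∨
  (e.card = 3 ∧ e ⊆ Finset.univ.biUnion W ∧ Crossing W e) ∨
  (∃ p ⊆ Finset.univ.biUnion W, p.card = 2 ∧ Crossing W p ∧
    (e = insert a p ∨ e = insert b p))

/-- An edge is blue iff it lies in `V_i ∪ {a}` or `V_i ∪ {b}` for some `i`. -/
def IsBlueH8 {α : Type} [DecidableEq α] {m : ℕ} (W : Fin m → Finset α) (a b : α)
    (e : Finset α) : Prop :=
  ∃ i, e ⊆ W i ∪ {a} ∨ e ⊆ W i ∪ {b}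

lemma edge_sub {α : Type} [DecidableEq α] {m : ℕ} {W : Fin m → Finset α} {a b : α}
    {e : Finset α} (h : IsEdgeH8 W a b e) :
    e ⊆ insert a (insert b (Finset.univ.biUnion W)) := by
  obtain (⟨i, _, hsub⟩ | ⟨i, p, hp, _, (rfl|rfl)⟩ | ⟨_, hsub, _⟩ | ⟨p, hp, _, _, (rfl|rfl)⟩) := h
  all_goals intro x hx
  all_goals simp only [Finset.mem_insert, Finset.mem_biUnion, Finset.mem_univ, true_and] at *
  · exact Or.inr (Or.inr ⟨i, hsub hx⟩)
  · rcases hx with rfl | hx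
    · exact Or.inl rfl
    · exact Or.inr (Or.inr ⟨i, hp hx⟩)
  · rcases hx with rfl | hx
    · exact Or.inr (Or.inl rfl)
    · exact Or.inr (Or.inr ⟨i, hp hx⟩)
  · obtain ⟨i, _, hi⟩ := Finset.mem_biUnion.mp (hsub hx)
    exact Or.inr (Or.inr ⟨i, hi⟩)
  · rcases hx with rfl | hx
    · exact Or.inl rfl
    · obtain ⟨i, _, hi⟩ := Finset.mem_biUnion.mp (hp hx)
      exact Or.inr (Or.inr ⟨i, hi⟩)
  · rcases hx with rfl | hx
    · exact Or.inr (Or.inl rfl)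
    · obtain ⟨i, _, hi⟩ := Finset.mem_biUnion.mp (hp hx)
      exact Or.inr (Or.inr ⟨i, hi⟩)

lemma not_ab {α : Type} [DecidableEq α] {m : ℕ} {W : Fin m → Finset α} {a b : α}
    (ha : ∀ i, a ∉ W i) (hb : ∀ i, b ∉ W i) (hab : a ≠ b) {e : Finset α}
    (h : IsEdgeH8 W a b e) : ¬ (a ∈ e ∧ b ∈ e) := by
  rintro ⟨hae, hbe⟩
  obtain (⟨i, _, hsub⟩ | ⟨i, p, hp, _, (rfl|rfl)⟩ | ⟨_, hsub, _⟩ | ⟨p, hp, _, _, (rfl|rfl)⟩) := h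
  · exact ha i (hsub hae)
  · rcases Finset.mem_insert.mp hbe with h' | h'
    · exact hab h'.symm
    · exact hb i (hp h')
  · rcases Finset.mem_insert.mp hae with h' | h'
    · exact hab h'
    · exact ha i (hp h')
  · obtain ⟨i, _, hi⟩ := Finset.mem_biUnion.mp (hsub hae)
    exact ha i hi
  · rcases Finset.mem_insert.mp hbe with h' | h'
    · exact hab h'.symm
    · obtain ⟨i, _, hi⟩ := Finset.mem_biUnion.mp (hp h')
      exact hb i hi
  · rcases Finset.mem_insert.mp hae with h' | h'
    · exact hab h'
    · obtain ⟨i, _, hi⟩ := Finset.mem_biUnion.mp (hp h')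
      exact ha i hi

lemma blue_of_two {α : Type} [DecidableEq α] {m : ℕ} {W : Fin m → Finset α} {a b : α}
    (ha : ∀ i, a ∉ W i) (hb : ∀ i, b ∉ W i) {e : Finset α} {i : Fin m} {u v : α}
    (hu : u ∈ e) (hv : v ∈ e) (hui : u ∈ W i) (hvi : v ∈ W i) (huv : u ≠ v)
    (h : IsEdgeH8 W a b e) : IsBlueH8 W a b e := by
  obtain (⟨j, _, hsub⟩ | ⟨j, p, hp, _, (rfl|rfl)⟩ | ⟨_, _, hcr⟩ | ⟨p, hp, _, hcr, (rfl|rfl)⟩) := h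
  · exact ⟨j, Or.inl (hsub.trans Finset.subset_union_left)⟩
  · exact ⟨j, Or.inl (Finset.insert_subset_insert _ hp |>.trans (by
      intro x hx; rcases Finset.mem_insert.mp hx with rfl | hx
      · simp
      · exact Finset.mem_union_left _ hx))⟩
  · exact ⟨j, Or.inr (Finset.insert_subset_insert _ hp |>.trans (by
      intro x hx; rcases Finset.mem_insert.mp hx with rfl | hx
      · simp
      · exact Finset.mem_union_left _ hx))⟩
  · exact absurd (hcr i) (by
      simp only [not_le]
      exact Finset.one_lt_card.mpr ⟨u, Finset.mem_inter.mpr ⟨hu, hui⟩, v,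
        Finset.mem_inter.mpr ⟨hv, hvi⟩, huv⟩)
  · refine absurd (hcr i) ?_
    simp only [not_le]
    have hu' : u ∈ p := by
      rcases Finset.mem_insert.mp hu with rfl | h' ; · exact absurd hui (ha i)
      exact h'
    have hv' : v ∈ p := by
      rcases Finset.mem_insert.mp hv with rfl | h' ; · exact absurd hvi (ha i)
      exact h'
    exact Finset.one_lt_card.mpr ⟨u, Finset.mem_inter.mpr ⟨hu', hui⟩, v,
      Finset.mem_inter.mpr ⟨hv', hvi⟩, huv⟩
  · refine absurd (hcr i) ?_
    simp only [not_le]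
    have hu' : u ∈ p := by
      rcases Finset.mem_insert.mp hu with rfl | h' ; · exact absurd hui (hb i)
      exact h'
    have hv' : v ∈ p := by
      rcases Finset.mem_insert.mp hv with rfl | h' ; · exact absurd hvi (hb i)
      exact h'
    exact Finset.one_lt_card.mpr ⟨u, Finset.mem_inter.mpr ⟨hu', hui⟩, v,
      Finset.mem_inter.mpr ⟨hv', hvi⟩, huv⟩

/-- The blue/red coloring of the construction `H` on `V_1 ∪ ⋯ ∪ V_{t-2} ∪ {a,b}` has no
monochromatic copy of `K_t^{(3)}`: there is no `t`-set `S` and color `x` such that every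
3-subset of `S` is an edge of `H` whose color is `x`. -/
theorem stmt_8 {α : Type} [DecidableEq α] (t : ℕ) (ht : 4 ≤ t)
    (W : Fin (t - 2) → Finset α) (a b : α)
    (hWcard : ∀ i, (W i).card = t - 2)
    (hWdisj : ∀ i j, i ≠ j → Disjoint (W i) (W j))
    (ha : ∀ i, a ∉ W i) (hb : ∀ i, b ∉ W i) (hab : a ≠ b) :
    ¬ ∃ (S : Finset α) (x : Bool), S.card = t ∧ ∀ e ⊆ S, e.card = 3 →
      IsEdgeH8 W a b e ∧ (IsBlueH8 W a b e ↔ x = true) := by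
  rintro ⟨S, x, hcard, hS⟩
  -- a helper to pick a third element
  have pick3 : ∀ u v : α, u ∈ S → v ∈ S → ∃ w ∈ S, w ≠ u ∧ w ≠ v := by
    intro u v hu hv
    have h1 : 1 ≤ ((S.erase u).erase v).card := by
      have h2 := Finset.card_erase_of_mem hu
      have h3 : ((S.erase u).erase v).card ≥ (S.erase u).card - 1 :=
        Finset.pred_card_le_card_erase
      omega
    obtain ⟨w, hw⟩ := Finset.card_pos.mp h1
    simp only [Finset.mem_erase] at hw
    exact ⟨w, hw.2.2, hw.2.1, hw.1⟩
  -- every vertex of S lies in ∪W ∪ {a,b}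
  have hSsub : S ⊆ insert a (insert b (Finset.univ.biUnion W)) := by
    intro v hv
    have h2 : 2 ≤ (S.erase v).card := by
      have := Finset.card_erase_of_mem hv; omega
    obtain ⟨e', he'sub, he'card⟩ := Finset.exists_subset_card_eq h2
    have hvne : v ∉ e' := fun h => (Finset.mem_erase.mp (he'sub h)).1 rfl
    have hesub : insert v e' ⊆ S :=
      Finset.insert_subset hv (he'sub.trans (Finset.erase_subset _ _))
    have hecard : (insert v e').card = 3 := by
      rw [Finset.card_insert_of_notMem hvne, he'card]
    exact edge_sub (hS _ hesub hecard).1 (Finset.mem_insert_self v e')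
  -- S cannot contain both a and b
  have hnab : ¬ (a ∈ S ∧ b ∈ S) := by
    rintro ⟨haS, hbS⟩
    obtain ⟨w, hwS, hwa, hwb⟩ := pick3 a b haS hbS
    have hsub : ({a, b, w} : Finset α) ⊆ S := by
      intro x hx; simp only [Finset.mem_insert, Finset.mem_singleton] at hx
      rcases hx with rfl | rfl | rfl <;> assumption
    have hc3 : ({a, b, w} : Finset α).card = 3 :=
      Finset.card_eq_three.mpr ⟨a, b, w, hab, hwa.symm, hwb.symm, rfl⟩
    exact not_ab ha hb hab (hS _ hsub hc3).1 ⟨by simp, by simp⟩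
  have hone : (S ∩ ({a, b} : Finset α)).card ≤ 1 := by
    by_cases haS : a ∈ S
    · have hbS : b ∉ S := fun h => hnab ⟨haS, h⟩
      have : S ∩ ({a, b} : Finset α) ⊆ {a} := by
        intro x hx
        simp only [Finset.mem_inter, Finset.mem_insert, Finset.mem_singleton] at hx ⊢
        rcases hx.2 with rfl | rfl
        · rfl
        · exact absurd hx.1 hbS
      simpa using Finset.card_le_card this
    · have : S ∩ ({a, b} : Finset α) ⊆ {b} := by
        intro x hx
        simp only [Finset.mem_inter, Finset.mem_insert, Finset.mem_singleton] at hx ⊢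
        rcases hx.2 with rfl | rfl
        · exact absurd hx.1 haS
        · rfl
      simpa using Finset.card_le_card this
  cases x with
  | false =>
    -- red case: S meets each W i in at most one vertex
    have hcross : ∀ i, (S ∩ W i).card ≤ 1 := by
      intro i
      by_contra hlt
      push_neg at hlt
      obtain ⟨u, hu, v, hv, huv⟩ := Finset.one_lt_card.mp hlt
      obtain ⟨huS, hui⟩ := Finset.mem_inter.mp hu
      obtain ⟨hvS, hvi⟩ := Finset.mem_inter.mp hv
      obtain ⟨w, hwS, hwu, hwv⟩ := pick3 u v huS hvS
      have hsub : ({u, v, w} : Finset α) ⊆ S := by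
        intro x hx; simp only [Finset.mem_insert, Finset.mem_singleton] at hx
        rcases hx with rfl | rfl | rfl <;> assumption
      have hc3 : ({u, v, w} : Finset α).card = 3 :=
        Finset.card_eq_three.mpr ⟨u, v, w, huv, hwu.symm, hwv.symm, rfl⟩
      obtain ⟨hedge, hblue⟩ := hS _ hsub hc3
      have hblu : IsBlueH8 W a b {u, v, w} :=
        blue_of_two ha hb (by simp) (by simp) hui hvi huv hedge
      simpa using hblue.mp hblu
    have hT : (S ∩ Finset.univ.biUnion W).card ≤ t - 2 := by
      have h1 : S ∩ Finset.univ.biUnion W ⊆ Finset.univ.biUnion (fun i => S ∩ W i) := by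
        intro x hx
        obtain ⟨hxS, hxU⟩ := Finset.mem_inter.mp hx
        obtain ⟨i, _, hi⟩ := Finset.mem_biUnion.mp hxU
        exact Finset.mem_biUnion.mpr ⟨i, Finset.mem_univ i, Finset.mem_inter.mpr ⟨hxS, hi⟩⟩
      calc (S ∩ Finset.univ.biUnion W).card
          ≤ (Finset.univ.biUnion (fun i => S ∩ W i)).card := Finset.card_le_card h1
        _ ≤ ∑ i, (S ∩ W i).card := Finset.card_biUnion_le
        _ ≤ ∑ _i : Fin (t - 2), 1 := Finset.sum_le_sum (fun i _ => hcross i)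
        _ = t - 2 := by simp
    have hsplit : S ⊆ (S ∩ Finset.univ.biUnion W) ∪ (S ∩ ({a, b} : Finset α)) := by
      intro v hv
      have := hSsub hv
      simp only [Finset.mem_insert] at this
      rcases this with rfl | rfl | h
      · exact Finset.mem_union_right _ (Finset.mem_inter.mpr ⟨hv, by simp⟩)
      · exact Finset.mem_union_right _ (Finset.mem_inter.mpr ⟨hv, by simp⟩)
      · exact Finset.mem_union_left _ (Finset.mem_inter.mpr ⟨hv, h⟩)
    have := (Finset.card_le_card hsplit).trans (Finset.card_union_le _ _)
    omega
  | true =>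
    -- blue case: S \ {a,b} lies in a single W i
    have hsd : 2 ≤ (S \ ({a, b} : Finset α)).card := by
      have h1 := Finset.le_card_sdiff ({a, b} : Finset α) S
      have h2 : ({a, b} : Finset α).card ≤ 2 := Finset.card_insert_le _ _ |>.trans (by simp)
      omega
    obtain ⟨u0, hu0⟩ := Finset.card_pos.mp (by omega : 0 < (S \ ({a, b} : Finset α)).card)
    have memW : ∀ v ∈ S \ ({a, b} : Finset α), ∃ i, v ∈ W i := by
      intro v hv
      obtain ⟨hvS, hvab⟩ := Finset.mem_sdiff.mp hv
      have := hSsub hvS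
      simp only [Finset.mem_insert, Finset.mem_biUnion, Finset.mem_univ, true_and,
        Finset.mem_singleton] at this hvab
      tauto
    obtain ⟨i0, hi0⟩ := memW u0 hu0
    have hall : ∀ v ∈ S \ ({a, b} : Finset α), v ∈ W i0 := by
      intro v hv
      by_cases hvu : v = u0
      · exact hvu ▸ hi0
      obtain ⟨hvS, hvab⟩ := Finset.mem_sdiff.mp hv
      obtain ⟨hu0S, hu0ab⟩ := Finset.mem_sdiff.mp hu0
      simp only [Finset.mem_insert, Finset.mem_singleton, not_or] at hvab hu0ab
      obtain ⟨w, hwS, hwu, hwv⟩ := pick3 u0 v hu0S hvS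
      have hsub : ({u0, v, w} : Finset α) ⊆ S := by
        intro x hx; simp only [Finset.mem_insert, Finset.mem_singleton] at hx
        rcases hx with rfl | rfl | rfl <;> assumption
      have hc3 : ({u0, v, w} : Finset α).card = 3 :=
        Finset.card_eq_three.mpr ⟨u0, v, w, Ne.symm hvu, hwu.symm, hwv.symm, rfl⟩
      obtain ⟨hedge, hblue⟩ := hS _ hsub hc3
      obtain ⟨k, hk | hk⟩ := hblue.mpr rfl
      all_goals {
        have hu0k : u0 ∈ W k := by
          have := hk (by simp : u0 ∈ ({u0, v, w} : Finset α))
          rcases Finset.mem_union.mp this with h | h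
          · exact h
          · simp only [Finset.mem_singleton] at h
            first
            | exact absurd h hu0ab.1
            | exact absurd h hu0ab.2
        have hki : k = i0 := by
          by_contra hne
          exact Finset.disjoint_left.mp (hWdisj k i0 hne) hu0k hi0
        have hvk : v ∈ W k := by
          have := hk (by simp : v ∈ ({u0, v, w} : Finset α))
          rcases Finset.mem_union.mp this with h | h
          · exact h
          · simp only [Finset.mem_singleton] at h
            first
            | exact absurd h hvab.1
            | exact absurd h hvab.2
        exact hki ▸ hvk
      }
    have h1 : (S \ ({a, b} : Finset α)).card ≤ t - 2 := by
      have := Finset.card_le_card (fun v hv => hall v hv)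
      rw [hWcard i0] at this
      exact this
    have h2 : S.card ≤ (S \ ({a, b} : Finset α)).card + (S ∩ ({a, b} : Finset α)).card := by
      have heq : S \ ({a, b} : Finset α) ∪ S ∩ ({a, b} : Finset α) = S :=
        Finset.sdiff_union_inter S _
      calc S.card = (S \ ({a, b} : Finset α) ∪ S ∩ ({a, b} : Finset α)).card := by rw [heq]
        _ ≤ _ := Finset.card_union_le _ _
    omega
end

section
/- Let H be a minimal k-Ramsey 3-uniform hypergraph for K_t^{(3)} (t ≥ 4, k ≥ 2), and let v be a vertex of H contained in at least one edge. Then the link graph of v is k-Ramsey for the complete graph K_{t-1}: every k-coloring of the edges of link(v) contains a monochromatic copy of K_{t-1}. -/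
/-- A 3-uniform hypergraph with edge set `E` is `k`-Ramsey for `K_t^{(3)}`. -/
def RamseyH {V : Type} [DecidableEq V] (k t : ℕ) (E : Finset (Finset V)) : Prop :=
  ∀ c : Finset V → Fin k, ∃ S : Finset V, S.card = t ∧
    ∃ x : Fin k, ∀ e ⊆ S, e.card = 3 → e ∈ E ∧ c e = x

/-- In a minimal `k`-Ramsey 3-uniform hypergraph for `K_t^{(3)}`, the link graph of any
vertex contained in an edge is `k`-Ramsey for the graph `K_{t-1}`. -/
theorem stmt_11 {V : Type} [DecidableEq V] (t k : ℕ) (ht : 4 ≤ t) (hk : 2 ≤ k)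
    (E : Finset (Finset V)) (h3 : ∀ e ∈ E, e.card = 3)
    (hRam : RamseyH k t E) (hmin : ∀ E' ⊂ E, ¬ RamseyH k t E')
    (v : V) (hv : ∃ e ∈ E, v ∈ e) :
    ∀ c : Finset V → Fin k, ∃ S : Finset V, S.card = t - 1 ∧
      ∃ x : Fin k, ∀ p ⊆ S, p.card = 2 →
        p ∈ (E.filter fun e => v ∈ e).image (fun e => e.erase v) ∧ c p = x := by
  intro c
  set E' := E.filter (fun e => v ∉ e) with hE'
  have hsub : E' ⊂ E := by
    obtain ⟨e, he, hve⟩ := hv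
    refine ⟨Finset.filter_subset _ _, fun h => ?_⟩
    have := h he
    rw [hE', Finset.mem_filter] at this
    exact this.2 hve
  have hnR := hmin E' hsub
  rw [RamseyH] at hnR
  push_neg at hnR
  obtain ⟨c₀, hc₀⟩ := hnR
  set c' : Finset V → Fin k := fun e => if v ∈ e then c (e.erase v) else c₀ e with hc'
  obtain ⟨S, hScard, x, hS⟩ := hRam c'
  have hvS : v ∈ S := by
    by_contra hvS
    obtain ⟨e, heS, he3, hbad⟩ := hc₀ S hScard x
    obtain ⟨heE, hcx⟩ := hS e heS he3
    have hve : v ∉ e := fun h => hvS (heS h)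
    have heE' : e ∈ E' := by rw [hE', Finset.mem_filter]; exact ⟨heE, hve⟩
    apply hbad heE'
    rw [hc'] at hcx
    simpa [hve] using hcx
  refine ⟨S.erase v, ?_, x, ?_⟩
  · rw [Finset.card_erase_of_mem hvS, hScard]
  · intro p hp hp2
    have hvp : v ∉ p := fun h => (Finset.mem_erase.mp (hp h)).1 rfl
    have heS : insert v p ⊆ S := by
      intro a ha
      rcases Finset.mem_insert.mp ha with rfl | ha
      · exact hvS
      · exact (Finset.mem_erase.mp (hp ha)).2
    have he3 : (insert v p).card = 3 := by
      rw [Finset.card_insert_of_notMem hvp, hp2]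
    obtain ⟨heE, hcx⟩ := hS _ heS he3
    have herase : (insert v p).erase v = p := Finset.erase_insert hvp
    constructor
    · exact Finset.mem_image.mpr ⟨insert v p,
        Finset.mem_filter.mpr ⟨heE, Finset.mem_insert_self _ _⟩, herase⟩
    · rw [hc'] at hcx
      simpa [Finset.mem_insert_self, herase] using hcx
end

section
/- Let H be a minimal k-Ramsey 3-uniform hypergraph for K_t^{(3)} (t ≥ 4, k ≥ 2). Then every vertex v of H satisfies deg(v) ≥ ŝ, where ŝ is the k-color size Ramsey number of K_{t-1}, i.e., deg(v) is at least the minimum number of edges of a graph G with G → (K_{t-1})_k; in particular δ(H) ≥ ŝ. -/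
/-- A graph `G` (a set of 2-element edges) is `k`-Ramsey for the graph `K_ℓ`. -/
def GraphRamsey {β : Type} [DecidableEq β] (k ℓ : ℕ) (G : Finset (Finset β)) : Prop :=
  ∀ c : Finset β → Fin k, ∃ S : Finset β, S.card = ℓ ∧
    ∃ x : Fin k, ∀ p ⊆ S, p.card = 2 → p ∈ G ∧ c p = x

/-- The set of edge-counts of graphs that are `k`-Ramsey for `K_ℓ`; its least element is
the size Ramsey number `r̂_k(K_ℓ)`. -/
def SizeRamseySet (k ℓ : ℕ) : Set ℕ :=
  {m | ∃ (n : ℕ) (G : Finset (Finset (Fin n))),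
    (∀ p ∈ G, p.card = 2) ∧ GraphRamsey k ℓ G ∧ G.card = m}

/-- In a minimal `k`-Ramsey 3-uniform hypergraph for `K_t^{(3)}`, every vertex `v` of
minimum degree (lying in at least one edge) has degree at least the `k`-color size Ramsey
number `ŝ = r̂_k(K_{t-1})`. -/
theorem stmt_12 {V : Type} [DecidableEq V] (t k : ℕ) (ht : 4 ≤ t) (hk : 2 ≤ k)
    (E : Finset (Finset V)) (h3 : ∀ e ∈ E, e.card = 3)
    (hRam : RamseyH k t E) (hmin : ∀ E' ⊂ E, ¬ RamseyH k t E')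
    (v : V) (hv : ∃ e ∈ E, v ∈ e)
    (hmindeg : ∀ u : V, (E.filter fun e => v ∈ e).card ≤ (E.filter fun e => u ∈ e).card)
    (shat : ℕ) (hshat : IsLeast (SizeRamseySet k (t - 1)) shat) :
    shat ≤ (E.filter fun e => v ∈ e).card := by
  classical
  set link : Finset (Finset V) := (E.filter fun e => v ∈ e).image (fun e => e.erase v)
    with hlinkdef
  have hlink2 : ∀ p ∈ link, p.card = 2 := by
    intro p hp
    obtain ⟨e, he, rfl⟩ := Finset.mem_image.mp hp
    obtain ⟨heE, hve⟩ := Finset.mem_filter.mp he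
    rw [Finset.card_erase_of_mem hve, h3 e heE]
  have hlinkcard : link.card = (E.filter fun e => v ∈ e).card := by
    apply Finset.card_image_of_injOn
    intro a ha b hb hab
    obtain ⟨-, hva⟩ := Finset.mem_filter.mp ha
    obtain ⟨-, hvb⟩ := Finset.mem_filter.mp hb
    rw [← Finset.insert_erase hva, ← Finset.insert_erase hvb]
    exact congrArg (insert v) hab
  -- the link of v is k-Ramsey for K_{t-1}
  have hlinkRam : GraphRamsey k (t - 1) link := by
    by_contra hno
    simp only [GraphRamsey, not_forall] at hno
    obtain ⟨c', hc'⟩ := hno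
    push_neg at hc'
    have hE' : (E.filter fun e => v ∉ e) ⊂ E := by
      refine ⟨Finset.filter_subset _ _, fun hsub => ?_⟩
      obtain ⟨e, he, hve⟩ := hv
      exact (Finset.mem_filter.mp (hsub he)).2 hve
    have hnR := hmin _ hE'
    simp only [RamseyH, not_forall] at hnR
    obtain ⟨c, hc⟩ := hnR
    push_neg at hc
    set c'' : Finset V → Fin k := fun e => if v ∈ e then c' (e.erase v) else c e with hc''
    obtain ⟨S, hScard, x, hS⟩ := hRam c''
    by_cases hvS : v ∈ S
    · have hS'card : (S.erase v).card = t - 1 := by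
        rw [Finset.card_erase_of_mem hvS, hScard]
      obtain ⟨p, hpS, hp2, hbad⟩ := hc' (S.erase v) hS'card x
      have hvp : v ∉ p := fun h => (Finset.mem_erase.mp (hpS h)).1 rfl
      have hins : insert v p ⊆ S := by
        intro y hy
        rcases Finset.mem_insert.mp hy with rfl | hy
        · exact hvS
        · exact Finset.erase_subset _ _ (hpS hy)
      have hcard3 : (insert v p).card = 3 := by
        rw [Finset.card_insert_of_notMem hvp, hp2]
      obtain ⟨heE, hcx⟩ := hS _ hins hcard3
      have herase : (insert v p).erase v = p := Finset.erase_insert hvp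
      have hplink : p ∈ link := Finset.mem_image.mpr
        ⟨insert v p, Finset.mem_filter.mpr ⟨heE, Finset.mem_insert_self _ _⟩, herase⟩
      have hcp : c' p = x := by
        have h1 : c'' (insert v p) = c' p := by
          simp [hc'', Finset.mem_insert_self, herase]
        rw [← h1]; exact hcx
      exact hbad hplink hcp
    · obtain ⟨e, heS, he3, hbad⟩ := hc S hScard x
      obtain ⟨heE, hcx⟩ := hS e heS he3
      have hve : v ∉ e := fun h => hvS (heS h)
      have hce : c e = x := by
        have h1 : c'' e = c e := by simp [hc'', hve]
        rw [← h1]; exact hcx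
      exact hbad (Finset.mem_filter.mpr ⟨heE, hve⟩) hce
  -- transfer the link to a graph on Fin n
  set T : Finset V := link.sup id with hTdef
  have hsubT : ∀ p ∈ link, p ⊆ T := fun p hp => Finset.le_sup (f := id) hp
  have hTne : T.Nonempty := by
    obtain ⟨e, he, hve⟩ := hv
    have hplink : e.erase v ∈ link := Finset.mem_image.mpr
      ⟨e, Finset.mem_filter.mpr ⟨he, hve⟩, rfl⟩
    have h2 : (e.erase v).card = 2 := hlink2 _ hplink
    obtain ⟨w, hw⟩ := Finset.card_pos.mp (by omega : 0 < (e.erase v).card)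
    exact ⟨w, hsubT _ hplink hw⟩
  set n : ℕ := T.card with hndef
  obtain ⟨w0, hw0⟩ := hTne
  have eqv : {x // x ∈ T} ≃ Fin n := T.equivFin
  set f : V → Fin n := fun x => if h : x ∈ T then eqv ⟨x, h⟩ else eqv ⟨w0, hw0⟩ with hfdef
  set g : Fin n → V := fun i => (eqv.symm i : V) with hgdef
  have hgf : ∀ x ∈ T, g (f x) = x := by
    intro x hx
    simp [hfdef, hgdef, hx]
  have hfg : ∀ x ∈ T, f (g (f x)) = f x := by
    intro x hx; rw [hgf x hx]
  have hfinj : Set.InjOn f T := by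
    intro a ha b hb hab
    have := congrArg g hab
    rwa [hgf a ha, hgf b hb] at this
  set G : Finset (Finset (Fin n)) := link.image (Finset.image f) with hGdef
  have hG2 : ∀ p ∈ G, p.card = 2 := by
    intro p hp
    obtain ⟨q, hq, rfl⟩ := Finset.mem_image.mp hp
    rw [Finset.card_image_of_injOn (hfinj.mono (hsubT q hq)), hlink2 q hq]
  have hGcard : G.card = link.card := by
    apply Finset.card_image_of_injOn
    intro a ha b hb hab
    have key : ∀ s ∈ link, (s.image f).image g = s := by
      intro s hs
      ext y
      simp only [Finset.mem_image]
      constructor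
      · rintro ⟨z, ⟨u, hu, rfl⟩, rfl⟩
        rwa [hgf u (hsubT s hs hu)]
      · intro hy
        exact ⟨f y, ⟨y, hy, rfl⟩, hgf y (hsubT s hs hy)⟩
    rw [← key a ha, ← key b hb, hab]
  have hGRam : GraphRamsey k (t - 1) G := by
    intro c
    obtain ⟨S, hScard, x, hS⟩ := hlinkRam (fun s => c (s.image f))
    have hST : S ⊆ T := by
      intro u hu
      have h2 : 1 < S.card := by omega
      obtain ⟨w, hwS, hwu⟩ := Finset.exists_mem_ne h2 u
      have hpair : ({u, w} : Finset V) ⊆ S := by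
        intro y hy
        rcases Finset.mem_insert.mp hy with rfl | hy
        · exact hu
        · exact (Finset.mem_singleton.mp hy) ▸ hwS
      have hpc : ({u, w} : Finset V).card = 2 := by
        rw [Finset.card_insert_of_notMem (by simp [Ne.symm hwu]), Finset.card_singleton]
      have := (hS _ hpair hpc).1
      exact hsubT _ this (Finset.mem_insert_self _ _)
    refine ⟨S.image f, ?_, x, ?_⟩
    · rw [Finset.card_image_of_injOn (hfinj.mono hST), hScard]
    · intro p hp hp2
      have hfp : ∀ z ∈ p, f (g z) = z := by
        intro z hz
        obtain ⟨u, hu, rfl⟩ := Finset.mem_image.mp (hp hz)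
        exact hfg u (hST hu)
      have hqS : p.image g ⊆ S := by
        intro y hy
        obtain ⟨z, hz, rfl⟩ := Finset.mem_image.mp hy
        obtain ⟨u, hu, rfl⟩ := Finset.mem_image.mp (hp hz)
        rwa [hgf u (hST hu)]
      have hpq : (p.image g).image f = p := by
        rw [Finset.image_image]
        ext y
        simp only [Finset.mem_image, Function.comp_apply]
        constructor
        · rintro ⟨z, hz, rfl⟩
          rw [hfp z hz]; exact hz
        · intro hy
          exact ⟨y, hy, hfp y hy⟩
      have hq2 : (p.image g).card = 2 := by
        have h1 : (p.image g).card ≤ p.card := Finset.card_image_le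
        have h2 : p.card ≤ (p.image g).card := by
          conv_lhs => rw [← hpq]
          exact Finset.card_image_le
        omega
      obtain ⟨hql, hqc⟩ := hS (p.image g) hqS hq2
      refine ⟨?_, ?_⟩
      · rw [← hpq]; exact Finset.mem_image.mpr ⟨p.image g, hql, rfl⟩
      · rw [← hpq]; exact hqc
  have hmem : (E.filter fun e => v ∈ e).card ∈ SizeRamseySet k (t - 1) :=
    ⟨n, G, hG2, hGRam, by rw [hGcard, hlinkcard]⟩
  exact hshat.2 hmem
end

section
/- For every k ≥ 2 and ℓ ≥ 2, the k-color size Ramsey number of the complete graph K_ℓ equals binom(r_k(K_ℓ), 2), i.e., the minimum number of edges of a graph G such that every k-coloring of E(G) yields a monochromatic K_ℓ is binom(r,2) where r = r_k(K_ℓ) is the k-color Ramsey number of K_ℓ. In particular, the lower bound holds: any graph G on fewer than binom(r,2) edges admits a k-coloring with no monochromatic K_ℓ. -/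
/-- Auxiliary: when `V.card ≤ t` there is a map injective on `V` into `Fin t`. -/
lemma stmt13_small_case {β : Type} [DecidableEq β] (t : ℕ) (ht : 1 ≤ t)
    (V : Finset β) (hV : V.card ≤ t) :
    ∃ f : β → Fin t, Set.InjOn f V := by
  classical
  have e : ↥V ≃ Fin (Fintype.card ↥V) := Fintype.equivFin ↥V
  have hle : Fintype.card ↥V ≤ t := by rwa [Fintype.card_coe]
  refine ⟨fun x => if h : x ∈ V then Fin.castLE hle (e ⟨x, h⟩) else ⟨0, ht⟩, ?_⟩
  intro u hu v hv huv
  simp only [Finset.mem_coe] at hu hv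
  simp only [dif_pos hu, dif_pos hv] at huv
  have := e.injective (Fin.castLE_injective hle huv)
  exact congrArg Subtype.val this

/-- Auxiliary: a graph with fewer than `C(t+1,2)` edges has a proper vertex coloring
with `t` colors. -/
lemma stmt13_proper_coloring {β : Type} [DecidableEq β] (t : ℕ) (ht : 1 ≤ t) :
    ∀ (N : ℕ) (V : Finset β) (G : Finset (Finset β)), V.card ≤ N →
    (∀ p ∈ G, p.card = 2 ∧ p ⊆ V) → 2 * G.card < (t + 1) * t →
    ∃ f : β → Fin t, ∀ p ∈ G, ∀ u ∈ p, ∀ v ∈ p, u ≠ v → f u ≠ f v := by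
  intro N
  induction N with
  | zero =>
    intro V G hVN hG _
    obtain ⟨f, hf⟩ := stmt13_small_case t ht V (le_trans hVN (Nat.zero_le t))
    refine ⟨f, fun p hp u hu v hv huv => ?_⟩
    obtain ⟨_, hpV⟩ := hG p hp
    exact fun h => huv (hf (hpV hu) (hpV hv) h)
  | succ N ih =>
    intro V G hVN hG hGcard
    by_cases hsmall : V.card ≤ t
    · obtain ⟨f, hf⟩ := stmt13_small_case t ht V hsmall
      refine ⟨f, fun p hp u hu v hv huv => ?_⟩
      obtain ⟨_, hpV⟩ := hG p hp
      exact fun h => huv (hf (hpV hu) (hpV hv) h)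
    · push_neg at hsmall
      -- counting: exists v ∈ V with degree < t
      have hsum : ∑ v ∈ V, (G.filter (fun p => v ∈ p)).card = 2 * G.card := by
        have h1 : ∀ v ∈ V, (G.filter (fun p => v ∈ p)).card
            = ∑ p ∈ G, (if v ∈ p then 1 else 0) := by
          intro v _
          rw [Finset.card_filter]
        rw [Finset.sum_congr rfl h1, Finset.sum_comm]
        have h2 : ∀ p ∈ G, ∑ v ∈ V, (if v ∈ p then 1 else 0) = 2 := by
          intro p hp
          obtain ⟨hc, hsub⟩ := hG p hp
          rw [← Finset.card_filter]
          have : V.filter (fun v => v ∈ p) = p := by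
            ext x
            simp only [Finset.mem_filter]
            exact ⟨fun h => h.2, fun h => ⟨hsub h, h⟩⟩
          rw [this, hc]
        rw [Finset.sum_congr rfl h2, Finset.sum_const, smul_eq_mul, mul_comm]
      have hex : ∃ v ∈ V, (G.filter (fun p => v ∈ p)).card < t := by
        by_contra hcon
        push_neg at hcon
        have : V.card * t ≤ ∑ v ∈ V, (G.filter (fun p => v ∈ p)).card := by
          calc V.card * t = ∑ _v ∈ V, t := by rw [Finset.sum_const, smul_eq_mul]
          _ ≤ _ := Finset.sum_le_sum hcon
        rw [hsum] at this
        have : (t + 1) * t ≤ V.card * t := Nat.mul_le_mul_right t hsmall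
        omega
      obtain ⟨v, hvV, hdeg⟩ := hex
      set G' := G.filter (fun p => v ∉ p) with hG'
      have hG'sub : ∀ p ∈ G', p.card = 2 ∧ p ⊆ V.erase v := by
        intro p hp
        rw [hG', Finset.mem_filter] at hp
        obtain ⟨hc, hsub⟩ := hG p hp.1
        refine ⟨hc, fun x hx => Finset.mem_erase.2 ⟨?_, hsub hx⟩⟩
        rintro rfl; exact hp.2 hx
      have hcard' : (V.erase v).card ≤ N := by
        rw [Finset.card_erase_of_mem hvV]; omega
      have hG'card : 2 * G'.card < (t + 1) * t :=
        lt_of_le_of_lt (Nat.mul_le_mul_left 2 (Finset.card_filter_le G _)) hGcard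
      obtain ⟨f', hf'⟩ := ih (V.erase v) G' hcard' hG'sub hG'card
      -- colors of neighbors of v
      set C : Finset (Fin t) :=
        (G.filter (fun p => v ∈ p)).biUnion (fun p => (p.erase v).image f') with hC
      have hCcard : C.card < t := by
        have h1 : C.card ≤ ∑ p ∈ G.filter (fun p => v ∈ p), ((p.erase v).image f').card :=
          Finset.card_biUnion_le
        have h2 : ∀ p ∈ G.filter (fun p => v ∈ p), ((p.erase v).image f').card ≤ 1 := by
          intro p hp
          rw [Finset.mem_filter] at hp
          have := (hG p hp.1).1
          have : (p.erase v).card = 1 := by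
            rw [Finset.card_erase_of_mem hp.2, this]
          calc ((p.erase v).image f').card ≤ (p.erase v).card := Finset.card_image_le
          _ = 1 := this
        calc C.card ≤ _ := h1
        _ ≤ ∑ _p ∈ G.filter (fun p => v ∈ p), 1 := Finset.sum_le_sum h2
        _ = (G.filter (fun p => v ∈ p)).card := by rw [Finset.sum_const, smul_eq_mul, mul_one]
        _ < t := hdeg
      have hexa : ∃ a : Fin t, a ∉ C := by
        by_contra hcon
        push_neg at hcon
        have : (Finset.univ : Finset (Fin t)).card ≤ C.card :=
          Finset.card_le_card (fun a _ => hcon a)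
        rw [Finset.card_univ, Fintype.card_fin] at this
        omega
      obtain ⟨a, ha⟩ := hexa
      refine ⟨Function.update f' v a, fun p hp u hu w hw huw => ?_⟩
      have hpeq : ∀ x ∈ p, x ≠ u → x ≠ w → False := by
        intro x hx hxu hxw
        have hsub : insert u (insert w {x}) ⊆ p := by
          intro y hy
          simp only [Finset.mem_insert, Finset.mem_singleton] at hy
          rcases hy with rfl | rfl | rfl
          exacts [hu, hw, hx]
        have : 3 ≤ p.card := by
          calc 3 = (insert u (insert w ({x} : Finset β))).card := by
                rw [Finset.card_insert_of_notMem, Finset.card_insert_of_notMem,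
                  Finset.card_singleton]
                · simp [Ne.symm hxw]
                · simp only [Finset.mem_insert, Finset.mem_singleton]
                  push_neg
                  exact ⟨huw, Ne.symm hxu⟩
          _ ≤ p.card := Finset.card_le_card hsub
        rw [(hG p hp).1] at this
        omega
      by_cases hvp : v ∈ p
      · -- v = u or v = w
        have hv2 : v = u ∨ v = w := by
          by_contra hcon
          push_neg at hcon
          exact hpeq v hvp hcon.1 hcon.2
        have key : ∀ y ∈ p, y ≠ v → Function.update f' v a y ≠ Function.update f' v a v := by
          intro y hy hyv
          rw [Function.update_of_ne hyv, Function.update_self]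
          intro h
          apply ha
          rw [hC]
          refine Finset.mem_biUnion.2 ⟨p, Finset.mem_filter.2 ⟨hp, hvp⟩, ?_⟩
          exact Finset.mem_image.2 ⟨y, Finset.mem_erase.2 ⟨hyv, hy⟩, h⟩
        rcases hv2 with rfl | rfl
        · exact (key w hw (Ne.symm huw)).symm
        · exact key u hu huw
      · have hpG' : p ∈ G' := Finset.mem_filter.2 ⟨hp, hvp⟩
        have hu' : u ≠ v := fun h => hvp (h ▸ hu)
        have hw' : w ≠ v := fun h => hvp (h ▸ hw)
        rw [Function.update_of_ne hu', Function.update_of_ne hw']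
        exact hf' p hpG' u hu w hw huw

/-- Erdős–Faudree–Rousseau–Schelp: the `k`-color size Ramsey number of `K_ℓ` equals
`C(r_k(K_ℓ), 2)`: the least number of edges of a graph that is `k`-Ramsey for `K_ℓ` is
exactly `C(r,2)` where `r = r_k(K_ℓ)`. In particular any graph with fewer edges admits a
`k`-coloring with no monochromatic `K_ℓ`. -/
theorem stmt_13 (k ℓ r : ℕ) (hk : 2 ≤ k) (hl : 2 ≤ ℓ)
    (hr : IsLeast {n : ℕ | ∀ c : Finset (Fin n) → Fin k, ∃ S : Finset (Fin n),
      S.card = ℓ ∧ ∃ x : Fin k, ∀ p ⊆ S, p.card = 2 → c p = x} r) :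
    IsLeast {m : ℕ | ∃ (n : ℕ) (G : Finset (Finset (Fin n))),
      (∀ p ∈ G, p.card = 2) ∧ GraphRamsey k ℓ G ∧ G.card = m} (r.choose 2) := by
  obtain ⟨hr1, hr2⟩ := hr
  have hk0 : 0 < k := by omega
  -- r ≥ ℓ
  have hrl : ℓ ≤ r := by
    obtain ⟨S, hS, -⟩ := hr1 (fun _ => ⟨0, hk0⟩)
    calc ℓ = S.card := hS.symm
    _ ≤ Fintype.card (Fin r) := S.card_le_univ.trans_eq (Finset.card_univ)
    _ = r := Fintype.card_fin r
  constructor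
  · -- membership: K_r works
    refine ⟨r, Finset.univ.powersetCard 2, ?_, ?_, ?_⟩
    · intro p hp
      exact (Finset.mem_powersetCard.1 hp).2
    · intro c
      obtain ⟨S, hS, x, hx⟩ := hr1 c
      exact ⟨S, hS, x, fun p hpS hp2 =>
        ⟨Finset.mem_powersetCard.2 ⟨Finset.subset_univ p, hp2⟩, hx p hpS hp2⟩⟩
    · rw [Finset.card_powersetCard, Finset.card_univ, Fintype.card_fin]
  · -- lower bound
    rintro m ⟨n, G, hG2, hRam, rfl⟩
    by_contra hcon
    push_neg at hcon
    set t := r - 1 with htdef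
    have ht1 : 1 ≤ t := by omega
    have htr : t + 1 = r := by omega
    -- t is not Ramsey: a bad coloring exists
    have htnot : t ∉ {n : ℕ | ∀ c : Finset (Fin n) → Fin k, ∃ S : Finset (Fin n),
        S.card = ℓ ∧ ∃ x : Fin k, ∀ p ⊆ S, p.card = 2 → c p = x} := by
      intro h
      have := hr2 h
      omega
    simp only [Set.mem_setOf_eq, not_forall] at htnot
    obtain ⟨c₀, hc₀⟩ := htnot
    push_neg at hc₀
    -- 2 * G.card < (t+1) * t
    have hchoose : 2 * ((t + 1).choose 2) = (t + 1) * t := by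
      rw [Nat.choose_two_right]
      have : 2 ∣ (t + 1) * t := by
        rcases Nat.even_or_odd t with h | h
        · exact Dvd.dvd.mul_left h.two_dvd _
        · exact Dvd.dvd.mul_right ((Nat.even_add_one.2 (Nat.not_even_iff_odd.2 h)).two_dvd) _
      simp only [Nat.add_sub_cancel]
      exact Nat.mul_div_cancel' this
    have hGlt : 2 * G.card < (t + 1) * t := by
      rw [← hchoose]
      have : G.card < (t + 1).choose 2 := by rw [htr]; exact hcon
      omega
    obtain ⟨f, hf⟩ := stmt13_proper_coloring t ht1 (Finset.univ : Finset (Fin n)).card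
      Finset.univ G le_rfl (fun p hp => ⟨hG2 p hp, Finset.subset_univ p⟩) hGlt
    -- the bad coloring on G
    obtain ⟨S, hS, x, hmono⟩ := hRam (fun p => c₀ (p.image f))
    -- f is injective on S
    have hinj : ∀ u ∈ S, ∀ v ∈ S, f u = f v → u = v := by
      intro u hu v hv hfe
      by_contra huv
      have hsub : ({u, v} : Finset (Fin n)) ⊆ S := by
        intro y hy
        simp only [Finset.mem_insert, Finset.mem_singleton] at hy
        rcases hy with rfl | rfl
        exacts [hu, hv]
      have hc2 : ({u, v} : Finset (Fin n)).card = 2 := by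
        rw [Finset.card_insert_of_notMem (by simpa using huv), Finset.card_singleton]
      obtain ⟨hmem, -⟩ := hmono {u, v} hsub hc2
      exact hf {u, v} hmem u (by simp) v (by simp) huv hfe
    have hTcard : (S.image f).card = ℓ := by
      rw [Finset.card_image_of_injOn (fun u hu v hv => hinj u hu v hv), hS]
    obtain ⟨q, hqT, hq2, hqne⟩ := hc₀ (S.image f) hTcard x
    obtain ⟨a, b, hab, rfl⟩ := Finset.card_eq_two.1 hq2
    obtain ⟨u, hu, rfl⟩ := Finset.mem_image.1 (hqT (by simp : a ∈ ({a, b} : Finset (Fin t))))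
    obtain ⟨v, hv, rfl⟩ := Finset.mem_image.1 (hqT (by simp : b ∈ ({f u, b} : Finset (Fin t))))
    have huv : u ≠ v := fun h => hab (by rw [h])
    have hsub : ({u, v} : Finset (Fin n)) ⊆ S := by
      intro y hy
      simp only [Finset.mem_insert, Finset.mem_singleton] at hy
      rcases hy with rfl | rfl
      exacts [hu, hv]
    have hc2 : ({u, v} : Finset (Fin n)).card = 2 := by
      rw [Finset.card_insert_of_notMem (by simpa using huv), Finset.card_singleton]
    obtain ⟨-, hcx⟩ := hmono {u, v} hsub hc2
    apply hqne
    rw [← hcx]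
    congr 1
    rw [Finset.image_insert, Finset.image_singleton]
end

section
/- Suppose there exist a 3-uniform hypergraph G (a 'gadget') on vertex set W, together with k edge-disjoint subhypergraphs H_1, ..., H_k covering part of its structure, a special vertex v ∉ W whose link is the complete graph on W, and suppose: (a) each H_i contains no copy of K_t^{(3)}; (b) for every k-coloring c of the edges of the complete graph on W, there is a color x and sets S_1, ..., S_k ⊆ W of size t-1 such that each S_i spans a monochromatic K_{t-1} in color x under c and all 3-subsets of S_i are edges of H_i; and (c) in every K_t^{(3)}-free k-coloring of the gadget, the edge sets E(H_1), ..., E(H_k) are monochromatic in k pairwise distinct colors. Then the hypergraph obtained by adding v with link binom(W,2) to the gadget is k-Ramsey for K_t^{(3)}. -/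
/-- The upper-bound gadget argument: given a 3-uniform gadget on a vertex set `W` with
edge-disjoint `K_t^{(3)}`-free subhypergraphs `H 1, …, H k` such that (b) every
`k`-coloring of the pairs of `W` yields a color `x` and, for each `i`, a `(t-1)`-set
monochromatic in `x` spanning a complete 3-uniform subhypergraph of `H i`, and (c) every
`K_t^{(3)}`-free coloring of the gadget makes the `H i` monochromatic in pairwise
distinct colors, the hypergraph obtained by adding a new vertex `v` whose link is the
complete graph on `W` is `k`-Ramsey for `K_t^{(3)}`. -/
theorem stmt_14 {V : Type} [DecidableEq V] (t k : ℕ) (ht : 4 ≤ t) (hk : 2 ≤ k)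
    (W : Finset V) (v : V) (hv : v ∉ W)
    (EG : Finset (Finset V)) (hEG : ∀ e ∈ EG, e.card = 3 ∧ e ⊆ W)
    (H : Fin k → Finset (Finset V)) (hHsub : ∀ i, H i ⊆ EG)
    (hdisj : ∀ i j, i ≠ j → Disjoint (H i) (H j))
    (hfree : ∀ i, ¬ ∃ S : Finset V, S.card = t ∧ ∀ e ⊆ S, e.card = 3 → e ∈ H i)
    (hb : ∀ c : Finset V → Fin k, ∃ x : Fin k, ∀ i : Fin k, ∃ S ⊆ W, S.card = t - 1 ∧
      (∀ p ⊆ S, p.card = 2 → c p = x) ∧ (∀ e ⊆ S, e.card = 3 → e ∈ H i))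
    (hc : ∀ φ : Finset V → Fin k,
      (¬ ∃ S : Finset V, S.card = t ∧ ∃ x : Fin k, ∀ e ⊆ S, e.card = 3 →
        e ∈ EG ∧ φ e = x) →
      ∃ g : Fin k → Fin k, Function.Injective g ∧ ∀ i, ∀ e ∈ H i, φ e = g i) :
    ∀ φ : Finset V → Fin k, ∃ S : Finset V, S.card = t ∧ ∃ x : Fin k,
      ∀ e ⊆ S, e.card = 3 →
        e ∈ EG ∪ (W.powersetCard 2).image (insert v) ∧ φ e = x := by
  intro φ
  by_contra hno
  have hcfree : ¬ ∃ S : Finset V, S.card = t ∧ ∃ x : Fin k, ∀ e ⊆ S, e.card = 3 →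
      e ∈ EG ∧ φ e = x := by
    rintro ⟨S, hS, x, hSx⟩
    exact hno ⟨S, hS, x, fun e he hce =>
      ⟨Finset.mem_union_left _ (hSx e he hce).1, (hSx e he hce).2⟩⟩
  obtain ⟨g, hginj, hg⟩ := hc φ hcfree
  obtain ⟨x, hx⟩ := hb (fun p => φ (insert v p))
  obtain ⟨i, hi⟩ := (Finite.injective_iff_surjective.mp hginj) x
  obtain ⟨S, hSW, hScard, hmono, hHi⟩ := hx i
  have hvS : v ∉ S := fun h => hv (hSW h)
  refine hno ⟨insert v S, ?_, x, ?_⟩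
  · rw [Finset.card_insert_of_notMem hvS, hScard]; omega
  · intro e he hce
    by_cases hve : v ∈ e
    · set p := e.erase v with hp
      have hpS : p ⊆ S := by
        intro a ha
        have := he (Finset.mem_of_mem_erase ha)
        rcases Finset.mem_insert.mp this with h | h
        · subst h; exact absurd ha (Finset.notMem_erase a e)
        · exact h
      have hpcard : p.card = 2 := by rw [hp, Finset.card_erase_of_mem hve, hce]
      have hep : e = insert v p := (Finset.insert_erase hve).symm
      constructor
      · apply Finset.mem_union_right
        exact Finset.mem_image.mpr ⟨p, Finset.mem_powersetCard.mpr ⟨hpS.trans hSW, hpcard⟩, hep.symm⟩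
      · rw [hep]; exact hmono p hpS hpcard
    · have heS : e ⊆ S := by
        intro a ha
        rcases Finset.mem_insert.mp (he ha) with h | h
        · subst h; exact absurd ha hve
        · exact h
      have heH := hHi e heS hce
      exact ⟨Finset.mem_union_left _ (hHsub i heH), (hg i e heH).trans hi⟩
end

section
/- Let H_1 and H_2 be 3-uniform hypergraphs, each equipped with two designated edges (e_1, f_1 in H_1 and e_2, f_2 in H_2) such that dist_{H_i}(e_i, f_i) = d ≥ 5 for i = 1,2, where dist denotes the minimum number of vertices on a loose connecting path between the two edges. Let H' be obtained from disjoint copies of H_1 and H_2 by identifying the edge f_1 with e_2 in such a way that no vertex of e_1 is identified with a vertex of f_2. Then dist_{H'}(e_1, f_2) ≥ d + 1. -/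
/-- `S` is the vertex set of a connecting path from edge `e` to edge `f` in the 3-uniform
hypergraph with edge set `E`: a nonempty sequence of edges starting at `e`, ending at
`f`, consecutive ones intersecting, whose vertices admit a linear order (a duplicate-free
list) in which every edge of the path is a consecutive segment, with `S` the union of the
path's edges. -/
def IsConnPath {V : Type} [DecidableEq V] (E : Finset (Finset V))
    (e f : Finset V) (S : Finset V) : Prop :=
  ∃ es : List (Finset V), es ≠ [] ∧ es.head? = some e ∧ es.getLast? = some f ∧
    (∀ g ∈ es, g ∈ E) ∧ es.Chain' (fun g h => (g ∩ h).Nonempty) ∧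
    S = es.foldr (· ∪ ·) ∅ ∧
    ∃ vs : List V, vs.Nodup ∧ vs.toFinset = S ∧
      ∀ g ∈ es, ∃ a : ℕ, g = ((vs.drop a).take 3).toFinset

/-!
A path from `e₁` to `f₂` in the glued hypergraph starts in `H₁` and ends in `H₂`, and edges of
`H₁` and `H₂` meet only inside `f₁`. Cut the path at its first edge meeting `f₁`: that edge and
all edges before it lie in `H₁`, and appending `f₁` gives a path of `H₁` from `e₁` to `f₁`. Its
vertex order comes from the given one: the earlier edges form a segment on one side of a vertex
of `f₁`, so after possibly reversing the order the vertices of `f₁` can be moved to the end.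
Hence this initial part `A` has `|A ∪ f₁| ≥ d`, and likewise a terminal part `B` lying in `H₂`.
Since `A ∩ B ⊆ f₁` and both parts meet `f₁`, counting gives `|A ∪ B| ≥ 2d - 5 ≥ d + 1` unless
`d = 5`; then either a part has more than three vertices or `A = e₁` and `B = f₂` are disjoint.
-/

namespace List

variable {V : Type} [DecidableEq V]

def segment (vs : List V) (a n : ℕ) : Finset V := ((vs.drop a).take n).toFinset

theorem mem_segment_iff {vs : List V} (hvs : vs.Nodup) {a n : ℕ} {y : V} :
    y ∈ vs.segment a n ↔ y ∈ vs ∧ a ≤ vs.idxOf y ∧ vs.idxOf y < a + n := by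
  simp only [segment, mem_toFinset, mem_iff_getElem, getElem_take, getElem_drop, length_take,
    length_drop]
  constructor
  · rintro ⟨i, hi, rfl⟩
    refine ⟨⟨_, _, rfl⟩, ?_⟩
    rw [hvs.idxOf_getElem]
    omega
  · rintro ⟨⟨j, hj, rfl⟩, h1, h2⟩
    rw [hvs.idxOf_getElem] at h1 h2
    exact ⟨j - a, by omega, by congr 1; omega⟩

theorem Nodup.idxOf_reverse {vs : List V} (hvs : vs.Nodup) {y : V} (hy : y ∈ vs) :
    vs.reverse.idxOf y = vs.length - 1 - vs.idxOf y := by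
  have hi : vs.idxOf y < vs.length := idxOf_lt_length_of_mem hy
  have hrev : vs.reverse[vs.length - 1 - vs.idxOf y]'(by simp; omega) = y := by
    rw [getElem_reverse]
    convert getElem_idxOf hi using 2
    omega
  conv_lhs => rw [← hrev]
  exact (nodup_reverse.mpr hvs).idxOf_getElem _ _

theorem segment_reverse {vs : List V} (hvs : vs.Nodup) {a n : ℕ} (h : a + n ≤ vs.length) :
    vs.reverse.segment (vs.length - (a + n)) n = vs.segment a n := by
  ext y
  rw [mem_segment_iff (nodup_reverse.mpr hvs), mem_segment_iff hvs, mem_reverse]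
  constructor
  · rintro ⟨hy, h1, h2⟩
    rw [hvs.idxOf_reverse hy] at h1 h2
    have := idxOf_lt_length_of_mem hy
    exact ⟨hy, by omega, by omega⟩
  · rintro ⟨hy, h1, h2⟩
    rw [hvs.idxOf_reverse hy]
    exact ⟨hy, by omega, by omega⟩

theorem segment_append (P Q : List V) (a n : ℕ) :
    (P ++ Q).segment a n = P.segment a n ∪ Q.segment (a - P.length) (n - (P.length - a)) := by
  simp only [segment, drop_append, take_append, toFinset_append, length_drop]

theorem segment_append_of_add_le (P Q : List V) {a n : ℕ} (h : a + n ≤ P.length) :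
    (P ++ Q).segment a n = P.segment a n := by
  rw [segment_append, show n - (P.length - a) = 0 by omega]
  simp [segment]

theorem segment_append_of_le (P Q : List V) {a n : ℕ} (h₁ : a ≤ P.length)
    (h₂ : P.length ≤ a + n) :
    (P ++ Q).segment a n = (P.drop a).toFinset ∪ (Q.take (a + n - P.length)).toFinset := by
  rw [segment_append, show a - P.length = 0 by omega,
    show n - (P.length - a) = a + n - P.length by omega]
  simp only [segment, drop_zero, take_of_length_le (l := P.drop a) (i := n) (by simp; omega)]

theorem segment_drop_take (vs : List V) {l m a n : ℕ} (hla : l ≤ a) (hn : a + n ≤ l + m) :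
    ((vs.drop l).take m).segment (a - l) n = vs.segment a n := by
  rw [segment, segment, drop_take, drop_drop, take_take, Nat.add_sub_cancel' hla]
  congr 3
  omega

theorem mem_foldr_union {es : List (Finset V)} {y : V} :
    y ∈ es.foldr (· ∪ ·) ∅ ↔ ∃ g ∈ es, y ∈ g := by
  induction es with
  | nil => simp
  | cons g es ih => simp [ih]

theorem foldr_union_append_singleton (es : List (Finset V)) (g : Finset V) :
    (es ++ [g]).foldr (· ∪ ·) ∅ = es.foldr (· ∪ ·) ∅ ∪ g := by
  ext y
  rw [Finset.mem_union, mem_foldr_union, mem_foldr_union]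
  simp [or_and_right, exists_or]

theorem exists_split_first_meet {E : Finset (Finset V)} {es : List (Finset V)}
    {e e' f : Finset V} (hhead : es.head? = some e) (hlast : es.getLast? = some e')
    (hchain : es.IsChain (fun g h => (g ∩ h).Nonempty)) (he : e ∈ E) (he' : e' ∉ E)
    (hcross : ∀ u ∈ E, ∀ w ∈ es, w ∉ E → u ∩ w ⊆ f) :
    ∃ pre g post, es = pre ++ g :: post ∧ (∀ h ∈ pre ++ [g], h ∈ E) ∧
      (∀ h ∈ pre, ∀ y ∈ h, y ∉ f) ∧ (f ∩ g).Nonempty := by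
  -- `g` is the first edge that leaves `E` or meets `f`; it cannot leave `E`, since its
  -- predecessor would then meet `f`
  obtain ⟨g, hfind⟩ : ∃ g, es.find? (fun h => h ∉ E ∨ (f ∩ h).Nonempty) = some g :=
    Option.isSome_iff_exists.mp <| find?_isSome.mpr ⟨e', mem_of_getLast? hlast, by simp [he']⟩
  obtain ⟨hg, pre, post, rfl, hpre⟩ := find?_eq_some_iff_append.mp hfind
  simp only [decide_eq_true_eq, Bool.not_eq_true', decide_eq_false_iff_not, not_or, not_not,
    Finset.not_nonempty_iff_eq_empty] at hg hpre
  have hgE : g ∈ E := by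
    by_contra hgE
    rcases eq_or_ne pre [] with rfl | hne
    · simp only [nil_append, head?_cons, Option.some.injEq] at hhead
      exact hgE (hhead ▸ he)
    obtain ⟨huE, huf⟩ := hpre _ (getLast_mem hne)
    obtain ⟨y, hy⟩ := (isChain_append.mp hchain).2.2 (pre.getLast hne)
      (by simp [getLast?_eq_some_getLast hne]) g rfl
    have hyf : y ∈ f ∩ pre.getLast hne :=
      Finset.mem_inter.mpr ⟨hcross _ huE g (by simp) hgE hy, (Finset.mem_inter.mp hy).1⟩
    simp [huf] at hyf
  refine ⟨pre, g, post, rfl, ?_, fun h hh y hy hyf => ?_, hg.resolve_left (not_not.mpr hgE)⟩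
  · simpa [or_imp, forall_and] using ⟨fun h hh => (hpre h hh).1, hgE⟩
  · simpa [(hpre h hh).2] using Finset.mem_inter.mpr ⟨hyf, hy⟩

def IsWindow (vs : List V) (g : Finset V) : Prop := ∃ a, a + 3 ≤ vs.length ∧ g = vs.segment a 3

theorem isWindow_of_card_eq {vs : List V} {g : Finset V} {a : ℕ} (hg : g = vs.segment a 3)
    (h3 : g.card = 3) : vs.IsWindow g := by
  refine ⟨a, ?_, hg⟩
  have := toFinset_card_le ((vs.drop a).take 3)
  rw [← segment, ← hg, h3, length_take, length_drop] at this
  omega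

theorem IsWindow.reverse {vs : List V} (hvs : vs.Nodup) {g : Finset V} (hg : vs.IsWindow g) :
    vs.reverse.IsWindow g := by
  obtain ⟨a, ha, rfl⟩ := hg
  exact ⟨vs.length - (a + 3), by simp; omega, (segment_reverse hvs ha).symm⟩

theorem exists_foldr_union_eq_segment {vs : List V} (hvs : vs.Nodup) {es : List (Finset V)}
    (hes : es ≠ []) (hwin : ∀ g ∈ es, vs.IsWindow g)
    (hchain : es.IsChain (fun g h => (g ∩ h).Nonempty)) :
    ∃ l c, l + 3 ≤ c ∧ c ≤ vs.length ∧
      (∀ g ∈ es, ∃ a, l ≤ a ∧ a + 3 ≤ c ∧ g = vs.segment a 3) ∧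
      es.foldr (· ∪ ·) ∅ = vs.segment l (c - l) := by
  induction hchain with
  | nil => exact absurd rfl hes
  | singleton g =>
    obtain ⟨a, ha, rfl⟩ := hwin g (mem_singleton_self g)
    exact ⟨a, a + 3, le_rfl, ha, fun k hk => ⟨a, le_rfl, le_rfl, mem_singleton.mp hk⟩, by simp⟩
  | @cons_cons g h t hgh _ ih =>
    obtain ⟨l, c, hlc, hc, hts, hU⟩ :=
      ih (cons_ne_nil _ _) fun k hk => hwin k (mem_cons_of_mem g hk)
    obtain ⟨a, ha, rfl⟩ := hwin g (mem_cons_self)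
    obtain ⟨a', hla', hac', rfl⟩ := hts h mem_cons_self
    obtain ⟨y, hy⟩ := hgh
    rw [Finset.mem_inter, mem_segment_iff hvs, mem_segment_iff hvs] at hy
    refine ⟨min l a, max c (a + 3), by omega, by omega, ?_, ?_⟩
    · rintro k (_ | ⟨_, hk⟩)
      · exact ⟨a, by omega, by omega, rfl⟩
      · obtain ⟨b, hb⟩ := hts k hk
        exact ⟨b, by omega, by omega, hb.2.2⟩
    · rw [foldr_cons, hU]
      ext z
      simp only [Finset.mem_union, mem_segment_iff hvs]
      by_cases hz : z ∈ vs
      · simp only [hz, true_and]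
        omega
      · simp [hz]

/-- The witness is `Z` with its vertices in `f` moved to the end, followed by the vertices of `f`
outside `Z`. -/
theorem exists_reorder_append_window (P Z : List V) (f : Finset V) (hPZ : (P ++ Z).Nodup)
    (hf : f.card = 3) (hfP : ∀ y ∈ f, y ∉ P) :
    ∃ R : List V, (P ++ R).Nodup ∧ (P ++ R).toFinset = (P ++ Z).toFinset ∪ f ∧
      (R.take Z.length).toFinset = Z.toFinset ∧ ∃ a, (P ++ R).segment a 3 = f := by
  set Z₁ := Z.filter (fun y => !decide (y ∈ f))
  set Z₂ := Z.filter (fun y => decide (y ∈ f))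
  set F' := f.toList.filter (fun y => !decide (y ∈ Z))
  have hZ : Z₁ ++ Z₂ ~ Z := by
    simpa [Z₂, Bool.not_not] using filter_append_perm (fun y => !decide (y ∈ f)) Z
  have hperm : P ++ (Z₁ ++ (Z₂ ++ F')) ~ P ++ Z ++ F' := by
    rw [← append_assoc Z₁, append_assoc P Z]
    exact (hZ.append_right F').append_left P
  have hnd : (P ++ Z ++ F').Nodup := by
    refine hPZ.append ((Finset.nodup_toList f).filter _) fun y hy hy' => ?_
    simp only [F', mem_filter, Finset.mem_toList, Bool.not_eq_eq_eq_not, Bool.not_true,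
      decide_eq_false_iff_not] at hy'
    rcases mem_append.mp hy with hy | hy
    · exact hfP y hy'.1 hy
    · exact hy'.2 hy
  have hF : (Z₂ ++ F').toFinset = f := by
    ext y
    simp only [Z₂, F', toFinset_append, Finset.mem_union, mem_toFinset, mem_filter,
      Finset.mem_toList, decide_eq_true_eq, Bool.not_eq_eq_eq_not, Bool.not_true,
      decide_eq_false_iff_not]
    tauto
  have hFlen : (Z₂ ++ F').length = 3 := by
    rw [← hf, ← hF, toFinset_card_of_nodup]
    exact (hperm.nodup_iff.mpr hnd).sublist (sublist_append_right _ _ |>.trans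
      (sublist_append_right _ _))
  refine ⟨Z₁ ++ (Z₂ ++ F'), hperm.nodup_iff.mpr hnd, ?_, ?_, ⟨(P ++ Z₁).length, ?_⟩⟩
  · rw [toFinset_eq_of_perm _ _ hperm]
    ext y
    simp only [F', toFinset_append, Finset.mem_union, mem_toFinset, mem_filter,
      Finset.mem_toList, Bool.not_eq_eq_eq_not, Bool.not_true, decide_eq_false_iff_not]
    tauto
  · rw [← append_assoc, take_append_of_le_length (by rw [hZ.length_eq]),
      take_of_length_le (by rw [hZ.length_eq]), toFinset_eq_of_perm _ _ hZ]
  · rw [← append_assoc, segment, drop_left, take_of_length_le hFlen.le, hF]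

variable {pre : List (Finset V)} {g f : Finset V} {x : V}

theorem exists_segment_bounds_of_idxOf_lt {vs : List V} (hvs : vs.Nodup) {b : ℕ}
    (hwin : ∀ h ∈ pre, vs.IsWindow h)
    (hchain : (pre ++ [vs.segment b 3]).IsChain (fun g h => (g ∩ h).Nonempty))
    (hx : x ∈ vs.segment b 3) (hlt : ∀ h ∈ pre, ∀ y ∈ h, vs.idxOf y < vs.idxOf x) :
    ∃ l c, l ≤ b ∧ b ≤ c ∧ c ≤ b + 3 ∧
      (∀ h ∈ pre, ∃ a, l ≤ a ∧ a + 3 ≤ c ∧ h = vs.segment a 3) ∧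
      pre.foldr (· ∪ ·) ∅ = vs.segment l (c - l) := by
  rcases eq_or_ne pre [] with rfl | hne
  · exact ⟨b, b, le_rfl, le_rfl, by omega, by simp, by simp [segment]⟩
  obtain ⟨l, c, hlc, hc, hpreWin, hpreU⟩ :=
    exists_foldr_union_eq_segment hvs hne hwin (isChain_append.mp hchain).1
  rw [mem_segment_iff hvs] at hx
  have hcx : c ≤ vs.idxOf x := by
    have hmem : vs[c - 1] ∈ pre.foldr (· ∪ ·) ∅ := by
      rw [hpreU, mem_segment_iff hvs, hvs.idxOf_getElem]
      exact ⟨getElem_mem _, by omega, by omega⟩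
    obtain ⟨h, hh, hyh⟩ := mem_foldr_union.mp hmem
    have := hlt h hh _ hyh
    rw [hvs.idxOf_getElem] at this
    omega
  obtain ⟨y, hy⟩ := (isChain_append.mp hchain).2.2 (pre.getLast hne)
    (by simp [getLast?_eq_some_getLast hne]) (vs.segment b 3) rfl
  obtain ⟨a, hla, hac, hlast⟩ := hpreWin _ (getLast_mem hne)
  rw [Finset.mem_inter, hlast, mem_segment_iff hvs, mem_segment_iff hvs] at hy
  exact ⟨l, c, by omega, by omega, by omega, hpreWin, hpreU⟩

theorem exists_order_of_segment_bounds {vs : List V} (hvs : vs.Nodup) {l b c : ℕ}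
    (hlb : l ≤ b) (hbc : b ≤ c) (hcb : c ≤ b + 3) (hb : b + 3 ≤ vs.length)
    (hpreWin : ∀ h ∈ pre, ∃ a, l ≤ a ∧ a + 3 ≤ c ∧ h = vs.segment a 3)
    (hpreU : pre.foldr (· ∪ ·) ∅ = vs.segment l (c - l)) (hf : f.card = 3)
    (hpre : ∀ h ∈ pre, ∀ y ∈ h, y ∉ f) :
    ∃ ws : List V, ws.Nodup ∧ ws.toFinset = (pre ++ [vs.segment b 3]).foldr (· ∪ ·) ∅ ∪ f ∧
      ∀ h ∈ pre ++ [vs.segment b 3, f], ∃ a, h = ws.segment a 3 := by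
  set ws := (vs.drop l).take (b + 3 - l)
  set P := ws.take (c - l)
  set Z := ws.drop (c - l)
  have hPZ : P ++ Z = ws := take_append_drop _ _
  have hPlen : P.length = c - l := by simp [P, ws]; omega
  have hZlen : Z.length = b + 3 - c := by simp [Z, ws]; omega
  have hP : P.toFinset = pre.foldr (· ∪ ·) ∅ := by
    rw [hpreU, ← segment_drop_take vs le_rfl (m := b + 3 - l) (by omega), Nat.sub_self]
    simp [segment, P, ws]
  -- the windows of `pre` lie in `P` and the window at `b` covers `Z`, so reordering `Z` keeps
  -- them all windows
  obtain ⟨R, hR, hRset, hRZ, hRf⟩ := exists_reorder_append_window P Z f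
    (hPZ ▸ ((take_sublist _ _).trans (drop_sublist _ _)).nodup hvs) hf fun y hyf hyP => by
      obtain ⟨h, hh, hyh⟩ := mem_foldr_union.mp (hP ▸ mem_toFinset.mpr hyP)
      exact hpre h hh y hyh hyf
  refine ⟨P ++ R, hR, ?_, ?_⟩
  · rw [hRset, hPZ, foldr_union_append_singleton, hpreU]
    congr 1
    ext y
    simp only [Finset.mem_union, mem_segment_iff hvs, ws, ← segment.eq_def]
    by_cases hy : y ∈ vs
    · simp only [hy, true_and]
      omega
    · simp [hy]
  intro h hh
  simp only [mem_append, mem_cons, not_mem_nil, or_false] at hh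
  rcases hh with hh | rfl | rfl
  · obtain ⟨a, hla, hac, rfl⟩ := hpreWin h hh
    refine ⟨a - l, ?_⟩
    rw [segment_append_of_add_le _ _ (by omega), ← segment_append_of_add_le P Z (a := a - l)
      (by omega), hPZ, segment_drop_take vs hla (by omega)]
  · refine ⟨b - l, ?_⟩
    rw [← segment_drop_take vs hlb (m := b + 3 - l) (by omega)]
    change ws.segment _ _ = _
    rw [← hPZ, segment_append_of_le _ _ (by omega) (by omega),
      segment_append_of_le _ _ (by omega) (by omega),
      hPlen, show b - l + 3 - (c - l) = Z.length by omega, take_length, hRZ]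
  · exact hRf.imp fun _ h => h.symm

theorem exists_order_of_idxOf_lt {vs : List V} (hvs : vs.Nodup)
    (hwin : ∀ h ∈ pre ++ [g], vs.IsWindow h)
    (hchain : (pre ++ [g]).IsChain (fun u w => (u ∩ w).Nonempty)) (hf : f.card = 3)
    (hxg : x ∈ g) (hpre : ∀ h ∈ pre, ∀ y ∈ h, y ∉ f)
    (hlt : ∀ h ∈ pre, ∀ y ∈ h, vs.idxOf y < vs.idxOf x) :
    ∃ ws : List V, ws.Nodup ∧ ws.toFinset = (pre ++ [g]).foldr (· ∪ ·) ∅ ∪ f ∧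
      ∀ h ∈ pre ++ [g, f], ∃ a, h = ws.segment a 3 := by
  obtain ⟨b, hb, rfl⟩ := hwin g (by simp)
  obtain ⟨l, c, hlb, hbc, hcb, hpreWin, hpreU⟩ := exists_segment_bounds_of_idxOf_lt hvs
    (fun h hh => hwin h (mem_append_left _ hh)) hchain hxg hlt
  exact exists_order_of_segment_bounds hvs hlb hbc hcb hb hpreWin hpreU hf hpre

theorem exists_order_append {vs : List V} (hvs : vs.Nodup) (hwin : ∀ h ∈ pre ++ [g], vs.IsWindow h)
    (hchain : (pre ++ [g]).IsChain (fun u w => (u ∩ w).Nonempty)) (hf : f.card = 3)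
    (hxf : x ∈ f) (hxg : x ∈ g) (hpre : ∀ h ∈ pre, ∀ y ∈ h, y ∉ f) :
    ∃ ws : List V, ws.Nodup ∧ ws.toFinset = (pre ++ [g]).foldr (· ∪ ·) ∅ ∪ f ∧
      ∀ h ∈ pre ++ [g, f], ∃ a, h = ws.segment a 3 := by
  have hxv : x ∈ vs := by
    obtain ⟨b, -, rfl⟩ := hwin g (by simp)
    exact ((mem_segment_iff hvs).mp hxg).1
  -- the edges of `pre` cover a segment avoiding `x`; if it lies after `x`, reverse `vs`
  have hside : (∀ h ∈ pre, ∀ y ∈ h, y ∈ vs ∧ vs.idxOf y < vs.idxOf x) ∨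
      (∀ h ∈ pre, ∀ y ∈ h, y ∈ vs ∧ vs.idxOf x < vs.idxOf y) := by
    rcases eq_or_ne pre [] with rfl | hne
    · simp
    obtain ⟨l, c, hlc, -, -, hU⟩ := exists_foldr_union_eq_segment hvs hne
      (fun h hh => hwin h (mem_append_left _ hh)) (isChain_append.mp hchain).1
    have hxU : x ∉ vs.segment l (c - l) := by
      rw [← hU]
      intro hx
      obtain ⟨h, hh, hxh⟩ := mem_foldr_union.mp hx
      exact hpre h hh x hxh hxf
    have hyU : ∀ h ∈ pre, ∀ y ∈ h, y ∈ vs.segment l (c - l) := fun h hh y hy =>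
      hU ▸ mem_foldr_union.mpr ⟨h, hh, hy⟩
    simp only [mem_segment_iff hvs, hxv, true_and] at hxU hyU
    by_cases hlx : l ≤ vs.idxOf x
    · exact .inl fun h hh y hy => have := hyU h hh y hy; ⟨this.1, by omega⟩
    · exact .inr fun h hh y hy => have := hyU h hh y hy; ⟨this.1, by omega⟩
  rcases hside with hlt | hgt
  · exact exists_order_of_idxOf_lt hvs hwin hchain hf hxg hpre fun h hh y hy => (hlt h hh y hy).2
  · refine exists_order_of_idxOf_lt (nodup_reverse.mpr hvs) (fun h hh => (hwin h hh).reverse hvs)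
      hchain hf hxg hpre fun h hh y hy => ?_
    obtain ⟨hyv, hxy⟩ := hgt h hh y hy
    rw [hvs.idxOf_reverse hyv, hvs.idxOf_reverse hxv]
    have := idxOf_lt_length_of_mem hyv
    omega

end List

section

open List

variable {V : Type} [DecidableEq V] {E : Finset (Finset V)} {e f S : Finset V}

theorem isConnPath_self (he : e ∈ E) (h3 : e.card = 3) : IsConnPath E e e e := by
  refine ⟨[e], by simp, rfl, rfl, by simpa using he, isChain_singleton e, by simp,
    e.toList, e.nodup_toList, by simp, ?_⟩
  simp only [mem_singleton, forall_eq]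
  exact ⟨0, by rw [drop_zero, take_of_length_le (by simp [h3]), Finset.toList_toFinset]⟩

theorem ne_of_forall_isConnPath_le_card {d : ℕ} (hd : 3 < d) (he : e ∈ E) (h3 : e.card = 3)
    (hlb : ∀ S, IsConnPath E e f S → d ≤ S.card) : e ≠ f := by
  rintro rfl
  have := hlb e (isConnPath_self he h3)
  omega

namespace IsConnPath

theorem symm (h : IsConnPath E e f S) : IsConnPath E f e S := by
  obtain ⟨es, hne, hhead, hlast, hE, hchain, rfl, vs, hvs, hS, hseg⟩ := h
  refine ⟨es.reverse, by simpa using hne, by rwa [head?_reverse], by rwa [getLast?_reverse],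
    fun g hg => hE g (mem_reverse.mp hg), ?_, ?_, vs, hvs, ?_,
    fun g hg => hseg g (mem_reverse.mp hg)⟩
  · exact isChain_reverse.mpr (hchain.imp fun g h hgh => Finset.inter_comm g h ▸ hgh)
  · ext y
    rw [mem_foldr_union, mem_foldr_union]
    simp
  · exact hS

theorem subset_sup_id (h : IsConnPath E e f S) : S ⊆ E.sup id := by
  obtain ⟨es, -, -, -, hE, -, rfl, -⟩ := h
  intro y hy
  obtain ⟨g, hg, hyg⟩ := mem_foldr_union.mp hy
  exact Finset.le_sup (f := id) (hE g hg) hyg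

theorem exists_subpath {E' : Finset (Finset V)} {e' : Finset V} (h : IsConnPath E' e e' S)
    (h3 : ∀ g ∈ E', g.card = 3) (he : e ∈ E) (hf : f ∈ E) (hf3 : f.card = 3)
    (hcross : ∀ u ∈ E, ∀ w ∈ E', w ∉ E → u ∩ w ⊆ f) (he' : e' ∉ E) :
    ∃ A ⊆ S, e ⊆ A ∧ (f ∩ A).Nonempty ∧ IsConnPath E e f (A ∪ f) := by
  obtain ⟨es, -, hhead, hlast, hE', hchain, rfl, vs, hvs, -, hseg⟩ := h
  obtain ⟨pre, g, post, rfl, hE, hpre, x, hx⟩ := exists_split_first_meet hhead hlast hchain he he'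
    fun u hu w hw => hcross u hu w (hE' w hw)
  rw [Finset.mem_inter] at hx
  have hsplit : pre ++ g :: post = (pre ++ [g]) ++ post := by simp
  rw [hsplit] at hhead hE' hchain hseg ⊢
  have hchain' := (isChain_append.mp hchain).1
  have hhead' : (pre ++ [g]).head? = some e := by
    rwa [head?_append_of_ne_nil _ (by simp)] at hhead
  have hwin : ∀ h ∈ pre ++ [g], vs.IsWindow h := fun h hh =>
    have ⟨_, ha⟩ := hseg h (mem_append_left _ hh)
    isWindow_of_card_eq ha (h3 h (hE' h (mem_append_left _ hh)))
  obtain ⟨ws, hws, hwsS, hwsWin⟩ := exists_order_append hvs hwin hchain' hf3 hx.1 hx.2 hpre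
  have happend : pre ++ [g, f] = (pre ++ [g]) ++ [f] := by simp
  refine ⟨(pre ++ [g]).foldr (· ∪ ·) ∅, ?_, ?_, ?_, pre ++ [g, f], by simp, ?_, by simp, ?_, ?_,
    ?_, ws, hws, hwsS, hwsWin⟩
  · intro y hy
    obtain ⟨h, hh, hyh⟩ := mem_foldr_union.mp hy
    exact mem_foldr_union.mpr ⟨h, mem_append_left _ hh, hyh⟩
  · exact fun y hy => mem_foldr_union.mpr ⟨e, mem_of_mem_head? hhead', hy⟩
  · exact ⟨x, Finset.mem_inter.mpr ⟨hx.1, mem_foldr_union.mpr ⟨g, by simp, hx.2⟩⟩⟩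
  · rwa [happend, head?_append_of_ne_nil _ (by simp)]
  · intro h hh
    rw [happend, mem_append, mem_singleton] at hh
    exact hh.elim (hE h) fun hhf => hhf ▸ hf
  · rw [happend]
    exact isChain_append.mpr ⟨hchain', isChain_singleton f,
      by simpa using ⟨x, Finset.mem_inter.mpr ⟨hx.2, hx.1⟩⟩⟩
  · rw [happend, foldr_union_append_singleton (pre ++ [g])]

end IsConnPath

end

theorem add_one_le_card_union {V : Type} [DecidableEq V] {A B f e e' : Finset V} {d : ℕ}
    (hd : 5 ≤ d) (hf : f.card = 3) (he : e.card = 3) (he' : e'.card = 3) (heA : e ⊆ A)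
    (he'B : e' ⊆ B) (hee' : e ∩ e' = ∅) (hfA : (f ∩ A).Nonempty) (hfB : (f ∩ B).Nonempty)
    (hAB : A ∩ B ⊆ f) (hdA : d ≤ (A ∪ f).card) (hdB : d ≤ (B ∪ f).card) :
    d + 1 ≤ (A ∪ B).card := by
  have hA := Finset.card_union_add_card_inter A f
  have hB := Finset.card_union_add_card_inter B f
  have hAB' := Finset.card_union_add_card_inter A B
  have hABA : (A ∩ B).card ≤ (A ∩ f).card :=
    Finset.card_le_card fun y hy => Finset.mem_inter.mpr ⟨(Finset.mem_inter.mp hy).1, hAB hy⟩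
  have hABB : (A ∩ B).card ≤ (B ∩ f).card :=
    Finset.card_le_card fun y hy => Finset.mem_inter.mpr ⟨(Finset.mem_inter.mp hy).2, hAB hy⟩
  have hfA' : 0 < (A ∩ f).card := Finset.card_pos.mpr (Finset.inter_comm f A ▸ hfA)
  have hfB' : 0 < (B ∩ f).card := Finset.card_pos.mpr (Finset.inter_comm f B ▸ hfB)
  -- generically `2 * d - 5 ≤ (A ∪ B).card`; for `d = 5` the extra vertex comes from
  -- `A ∩ B = ∅` or from `A` or `B` being larger than an edge
  by_cases hsmall : A.card ≤ 3 ∧ B.card ≤ 3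
  · have hAe : e = A := Finset.eq_of_subset_of_card_le heA (by omega)
    have hBe : e' = B := Finset.eq_of_subset_of_card_le he'B (by omega)
    have hAB0 : (A ∩ B).card = 0 := by rw [← hAe, ← hBe, hee', Finset.card_empty]
    omega
  · omega

theorem stmt_17_general {V : Type} [DecidableEq V] (d : ℕ) (hd : 5 ≤ d)
    (E1 E2 : Finset (Finset V)) (e1 f1 e2 f2 : Finset V)
    (h31 : ∀ g ∈ E1, g.card = 3) (h32 : ∀ g ∈ E2, g.card = 3)
    (he1 : e1 ∈ E1) (hf1 : f1 ∈ E1) (he2 : e2 ∈ E2) (hf2 : f2 ∈ E2)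
    (hglue : f1 = e2)
    (hinter : (E1.sup id) ∩ (E2.sup id) = f1)
    (hno : e1 ∩ f2 = ∅)
    (hd1lb : ∀ S, IsConnPath E1 e1 f1 S → d ≤ S.card)
    (hd2lb : ∀ S, IsConnPath E2 e2 f2 S → d ≤ S.card) :
    ∀ S, IsConnPath (E1 ∪ E2) e1 f2 S → d + 1 ≤ S.card := by
  intro S hS
  subst hglue
  have h3 : ∀ g ∈ E1 ∪ E2, g.card = 3 := fun g hg => (Finset.mem_union.mp hg).elim (h31 g) (h32 g)
  have hcross : ∀ u ∈ E1, ∀ w ∈ E2, u ∩ w ⊆ f1 := fun u hu w hw =>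
    hinter ▸ Finset.inter_subset_inter (Finset.le_sup (f := id) hu) (Finset.le_sup (f := id) hw)
  have hboth : ∀ g ∈ E1, g ∈ E2 → g = f1 := fun g hg1 hg2 =>
    Finset.eq_of_subset_of_card_le (by simpa using hcross g hg1 g hg2)
      (by rw [h31 g hg1, h31 f1 hf1])
  have he1E2 : e1 ∉ E2 := fun h =>
    ne_of_forall_isConnPath_le_card (by omega) he1 (h31 e1 he1) hd1lb (hboth e1 he1 h)
  have hf2E1 : f2 ∉ E1 := fun h =>
    ne_of_forall_isConnPath_le_card (by omega) he2 (h32 f1 he2) hd2lb (hboth f2 h hf2).symm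
  obtain ⟨A, hAS, heA, hfA, hA⟩ := hS.exists_subpath h3 he1 hf1 (h31 f1 hf1)
    (fun u hu w hw hw1 => hcross u hu w ((Finset.mem_union.mp hw).resolve_left hw1)) hf2E1
  obtain ⟨B, hBS, hfB, hf1B, hB⟩ := hS.symm.exists_subpath h3 hf2 he2 (h32 f1 he2)
    (fun u hu w hw hw2 =>
      Finset.inter_comm u w ▸ hcross w ((Finset.mem_union.mp hw).resolve_right hw2) u hu) he1E2
  have hAB : A ∩ B ⊆ f1 := hinter ▸ Finset.inter_subset_inter
    (Finset.union_subset_left hA.subset_sup_id) (Finset.union_subset_left hB.subset_sup_id)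
  calc d + 1 ≤ (A ∪ B).card := add_one_le_card_union hd (h31 f1 hf1) (h31 e1 he1) (h32 f2 hf2)
        heA hfB hno hfA hf1B hAB (hd1lb _ hA) (hd2lb _ hB.symm)
    _ ≤ S.card := Finset.card_le_card (Finset.union_subset hAS hBS)

/-- Concatenating two positive signal senders: if `dist(e₁,f₁) = d ≥ 5` in `H₁` and
`dist(e₂,f₂) = d` in `H₂`, and `H'` is obtained by identifying `f₁` with `e₂` (the two
hypergraphs sharing no other vertices, with no vertex of `e₁` identified with one of
`f₂`), then `dist(e₁,f₂) ≥ d + 1` in `H'`. -/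
theorem stmt_17 {V : Type} [DecidableEq V] (d : ℕ) (hd : 5 ≤ d)
    (E1 E2 : Finset (Finset V)) (e1 f1 e2 f2 : Finset V)
    (h31 : ∀ g ∈ E1, g.card = 3) (h32 : ∀ g ∈ E2, g.card = 3)
    (he1 : e1 ∈ E1) (hf1 : f1 ∈ E1) (he2 : e2 ∈ E2) (hf2 : f2 ∈ E2)
    (hglue : f1 = e2)
    (hinter : (E1.sup id) ∩ (E2.sup id) = f1)
    (hno : e1 ∩ f2 = ∅)
    (hd1lb : ∀ S, IsConnPath E1 e1 f1 S → d ≤ S.card)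
    (hd1ub : ∃ S, IsConnPath E1 e1 f1 S ∧ S.card = d)
    (hd2lb : ∀ S, IsConnPath E2 e2 f2 S → d ≤ S.card)
    (hd2ub : ∃ S, IsConnPath E2 e2 f2 S ∧ S.card = d) :
    ∀ S, IsConnPath (E1 ∪ E2) e1 f2 S → d + 1 ≤ S.card :=
  stmt_17_general d hd E1 E2 e1 f1 e2 f2 h31 h32 he1 hf1 he2 hf2 hglue hinter hno hd1lb hd2lb
end

section
/- For all t ≥ 4 and k ≥ 2, the value s_{k,1}(K_t^{(3)}) — the minimum over all minimal k-Ramsey 3-uniform hypergraphs H for K_t^{(3)} of the minimum vertex degree of H — satisfies s_{k,1}(K_t^{(3)}) ≥ binom(r_k(K_{t-1}), 2), where r_k(K_{t-1}) is the k-color graph Ramsey number of K_{t-1}. -/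
/-- Lower bound on `s_{k,1}(K_t^{(3)})`: if `r = r_k(K_{t-1})` is the `k`-color graph
Ramsey number of `K_{t-1}` and the size-Ramsey identity `r̂_k(K_{t-1}) = C(r,2)` holds,
then in every minimal `k`-Ramsey 3-uniform hypergraph for `K_t^{(3)}` every vertex lying
in an edge has degree at least `C(r,2)`; i.e. `s_{k,1}(K_t^{(3)}) ≥ C(r_k(K_{t-1}), 2)`. -/
theorem stmt_19 {V : Type} [DecidableEq V] (t k : ℕ) (ht : 4 ≤ t) (hk : 2 ≤ k)
    (r : ℕ)
    (hr : IsLeast {n : ℕ | ∀ c : Finset (Fin n) → Fin k, ∃ S : Finset (Fin n),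
      S.card = t - 1 ∧ ∃ x : Fin k, ∀ p ⊆ S, p.card = 2 → c p = x} r)
    (hEFRS : IsLeast {m : ℕ | ∃ (n : ℕ) (G : Finset (Finset (Fin n))),
      (∀ p ∈ G, p.card = 2) ∧
      (∀ c : Finset (Fin n) → Fin k, ∃ S : Finset (Fin n), S.card = t - 1 ∧
        ∃ x : Fin k, ∀ p ⊆ S, p.card = 2 → p ∈ G ∧ c p = x) ∧
      G.card = m} (r.choose 2))
    (E : Finset (Finset V)) (h3 : ∀ e ∈ E, e.card = 3)
    (hRam : RamseyH k t E) (hmin : ∀ E' ⊂ E, ¬ RamseyH k t E')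
    (v : V) (hv : ∃ e ∈ E, v ∈ e) :
    r.choose 2 ≤ (E.filter fun e => v ∈ e).card := by
  classical
  obtain ⟨e₀, he₀E, hve₀⟩ := hv
  set D : Finset (Finset V) := E.filter fun e => v ∈ e with hD
  set L : Finset (Finset V) := D.image (fun e => e.erase v) with hLdef
  -- basic facts
  have hDmem : ∀ e ∈ D, e ∈ E ∧ v ∈ e := by
    intro e he; simpa [hD] using he
  have hL2 : ∀ p ∈ L, p.card = 2 := by
    intro p hp
    obtain ⟨e, he, rfl⟩ := Finset.mem_image.mp hp
    obtain ⟨heE, hve⟩ := hDmem e he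
    rw [Finset.card_erase_of_mem hve, h3 e heE]
  have hLD : L.card = D.card := by
    apply Finset.card_image_of_injOn
    intro a ha b hb hab
    obtain ⟨-, hva⟩ := hDmem a ha
    obtain ⟨-, hvb⟩ := hDmem b hb
    have hab' : a.erase v = b.erase v := hab
    have : insert v (a.erase v) = insert v (b.erase v) := by rw [hab']
    rwa [Finset.insert_erase hva, Finset.insert_erase hvb] at this
  -- the link of v is k-Ramsey for K_{t-1}
  have linkRamsey : ∀ c : Finset V → Fin k, ∃ S : Finset V, S.card = t - 1 ∧
      ∃ x : Fin k, ∀ p ⊆ S, p.card = 2 → p ∈ L ∧ c p = x := by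
    intro c
    set E' : Finset (Finset V) := E.filter fun e => v ∉ e with hE'
    have hsub : E' ⊂ E := by
      constructor
      · exact Finset.filter_subset _ _
      · intro hsup
        have := hsup he₀E
        rw [hE', Finset.mem_filter] at this
        exact this.2 hve₀
    have hnR := hmin E' hsub
    unfold RamseyH at hnR
    push_neg at hnR
    obtain ⟨c', hc'⟩ := hnR
    set c'' : Finset V → Fin k := fun e => if v ∈ e then c (e.erase v) else c' e with hc''
    obtain ⟨S, hS, x, hmono⟩ := hRam c''
    have hvS : v ∈ S := by
      by_contra hvS
      obtain ⟨e, heS, he3, hbad⟩ := hc' S hS x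
      obtain ⟨heE, hcol⟩ := hmono e heS he3
      have hvne : v ∉ e := fun h => hvS (heS h)
      have heE' : e ∈ E' := by rw [hE', Finset.mem_filter]; exact ⟨heE, hvne⟩
      have : c'' e = c' e := by rw [hc'']; simp [hvne]
      exact hbad heE' (by rw [← this, hcol])
    refine ⟨S.erase v, by rw [Finset.card_erase_of_mem hvS, hS], x, ?_⟩
    intro p hpS hp2
    have hvp : v ∉ p := fun h => (Finset.mem_erase.mp (hpS h)).1 rfl
    have hins : insert v p ⊆ S :=
      Finset.insert_subset hvS (hpS.trans (Finset.erase_subset _ _))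
    have hins3 : (insert v p).card = 3 := by
      rw [Finset.card_insert_of_notMem hvp, hp2]
    obtain ⟨hinsE, hcol⟩ := hmono (insert v p) hins hins3
    have herase : (insert v p).erase v = p := Finset.erase_insert hvp
    constructor
    · rw [hLdef, Finset.mem_image]
      exact ⟨insert v p, by rw [hD, Finset.mem_filter]; exact ⟨hinsE, Finset.mem_insert_self v p⟩,
        herase⟩
    · have : c'' (insert v p) = c p := by
        rw [hc'']; simp [Finset.mem_insert_self, herase]
      rw [← this, hcol]
  -- embed the link into Fin n
  set W : Finset V := L.biUnion id with hW
  have hsubW : ∀ p ∈ L, p ⊆ W := by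
    intro p hp w hw
    rw [hW, Finset.mem_biUnion]; exact ⟨p, hp, hw⟩
  have hWpos : 0 < W.card := by
    have hp0 : e₀.erase v ∈ L := by
      rw [hLdef, Finset.mem_image]
      exact ⟨e₀, by rw [hD, Finset.mem_filter]; exact ⟨he₀E, hve₀⟩, rfl⟩
    have h2 := hL2 _ hp0
    have : (e₀.erase v).Nonempty := by rw [← Finset.card_pos, h2]; norm_num
    obtain ⟨w, hw⟩ := this
    exact Finset.card_pos.mpr ⟨w, hsubW _ hp0 hw⟩
  set n := W.card with hn
  set f : V → Fin n := fun w => if h : w ∈ W then W.equivFin ⟨w, h⟩ else ⟨0, hWpos⟩ with hf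
  have hfinj : Set.InjOn f W := by
    intro a ha b hb hab
    have ha' : a ∈ W := ha
    have hb' : b ∈ W := hb
    rw [hf] at hab
    simp only [dif_pos ha', dif_pos hb'] at hab
    have := W.equivFin.injective hab
    exact congrArg Subtype.val this
  set G : Finset (Finset (Fin n)) := L.image (fun p => p.image f) with hG
  have hmem : D.card ∈ {m : ℕ | ∃ (n : ℕ) (G : Finset (Finset (Fin n))),
      (∀ p ∈ G, p.card = 2) ∧
      (∀ c : Finset (Fin n) → Fin k, ∃ S : Finset (Fin n), S.card = t - 1 ∧
        ∃ x : Fin k, ∀ p ⊆ S, p.card = 2 → p ∈ G ∧ c p = x) ∧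
      G.card = m} := by
    refine ⟨n, G, ?_, ?_, ?_⟩
    · intro q hq
      obtain ⟨p, hp, rfl⟩ := Finset.mem_image.mp hq
      rw [Finset.card_image_of_injOn (hfinj.mono (by exact_mod_cast hsubW p hp)), hL2 p hp]
    · intro c
      obtain ⟨S, hS, x, hmono⟩ := linkRamsey (fun p => c (p.image f))
      have hSW : S ⊆ W := by
        intro w hw
        have hS2 : 2 ≤ S.card := by omega
        have : (S.erase w).Nonempty := by
          rw [← Finset.card_pos, Finset.card_erase_of_mem hw]; omega
        obtain ⟨u, hu⟩ := this
        have hune : u ≠ w := (Finset.mem_erase.mp hu).1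
        have hpair : ({w, u} : Finset V) ⊆ S :=
          Finset.insert_subset hw (Finset.singleton_subset_iff.mpr (Finset.mem_of_mem_erase hu))
        have hpair2 : ({w, u} : Finset V).card = 2 := by
          rw [Finset.card_insert_of_notMem (by simp [hune.symm]), Finset.card_singleton]
        have := (hmono _ hpair hpair2).1
        exact hsubW _ this (Finset.mem_insert_self w {u})
      refine ⟨S.image f, ?_, x, ?_⟩
      · rw [Finset.card_image_of_injOn (hfinj.mono (by exact_mod_cast hSW)), hS]
      · intro q hq hq2
        obtain ⟨p, hpS, rfl⟩ := Finset.subset_image_iff.mp hq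
        have hp2 : p.card = 2 := by
          rwa [Finset.card_image_of_injOn (hfinj.mono (by exact_mod_cast hpS.trans hSW))] at hq2
        obtain ⟨hpL, hcx⟩ := hmono p hpS hp2
        exact ⟨Finset.mem_image_of_mem _ hpL, hcx⟩
    · rw [hG, Finset.card_image_of_injOn, hLD]
      intro a ha b hb hab
      apply Finset.ext
      intro w
      constructor
      · intro hwa
        have hab' : a.image f = b.image f := hab
        have : f w ∈ b.image f := hab' ▸ Finset.mem_image_of_mem f hwa
        obtain ⟨u, hu, hfu⟩ := Finset.mem_image.mp this
        rwa [← hfinj (hsubW b hb hu) (hsubW a ha hwa) hfu]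
      · intro hwb
        have hab' : a.image f = b.image f := hab
        have : f w ∈ a.image f := hab'.symm ▸ Finset.mem_image_of_mem f hwb
        obtain ⟨u, hu, hfu⟩ := Finset.mem_image.mp this
        rwa [← hfinj (hsubW a ha hu) (hsubW b hb hwb) hfu]
  exact hEFRS.2 hmem
end
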